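/- arXiv:2112.13278 — 12 statements merged into one kernel-verified Lean document; each statement's English description precedes it below -/
import Mathlib

section
/- Let B be a local ring with maximal ideal M, let C be a set of prime ideals of B, let I be an ideal of B such that I is not contained in P for every P in C, and let D be a subset of B. Suppose the cardinality of C × D is strictly less than the cardinality of B/M. Then I is not contained in the union of the sets {P + r : P ∈ C, r ∈ D} (i.e., there exists x ∈ I such that for all P ∈ C and r ∈ D, x ∉ P + r, meaning x - r ∉ P). -/
open Cardinal

/-- Auxiliary lemma: Heitmann avoidance for finitely generated ideals, by induction
on a finite generating set. -/
lemma heitmann_aux (B : Type*) [CommRing B] [IsLocalRing B] (s : Finset B) :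
    ∀ (C : Set (Ideal B)), (∀ P ∈ C, P.IsPrime) →
      (∀ P ∈ C, ¬ Ideal.span (s : Set B) ≤ P) →
      ∀ (D : Set B),
        Cardinal.mk (C × D) < Cardinal.mk (B ⧸ IsLocalRing.maximalIdeal B) →
        ∃ x ∈ Ideal.span (s : Set B), ∀ P ∈ C, ∀ r ∈ D, x - r ∉ P := by
  induction s using Finset.cons_induction with
  | empty =>
      intro C hC hI D hcard
      refine ⟨0, Ideal.zero_mem _, fun P hP => absurd ?_ (hI P hP)⟩
      simp
  | cons a s ha ih =>
      intro C hC hI D hcard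
      set M := IsLocalRing.maximalIdeal B with hM
      -- split the primes according to whether they contain `span s`
      set C₁ : Set (Ideal B) := {P ∈ C | Ideal.span (s : Set B) ≤ P} with hC₁def
      set C₂ : Set (Ideal B) := {P ∈ C | ¬ Ideal.span (s : Set B) ≤ P} with hC₂def
      -- for P in C₁, a ∉ P
      have haP : ∀ P ∈ C₁, a ∉ P := by
        intro P hP haP
        refine hI P hP.1 ?_
        rw [Finset.coe_cons, Ideal.span_le, Set.insert_subset_iff]
        exact ⟨haP, Ideal.span_le.mp hP.2⟩
      -- choose t whose residue class avoids all "bad" classes coming from C₁ × D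
      classical
      let g : C₁ × D → B ⧸ M := fun pr =>
        if h : ∃ t : B, t * a - (pr.2 : B) ∈ (pr.1 : Ideal B) then
          Ideal.Quotient.mk M h.choose
        else 0
      have hgcard : Cardinal.mk (Set.range g) < Cardinal.mk (B ⧸ M) := by
        refine lt_of_le_of_lt (Cardinal.mk_range_le) (lt_of_le_of_lt ?_ hcard)
        exact Cardinal.mk_le_of_injective
          (f := Prod.map (Set.inclusion (fun P hP => hP.1)) id)
          (Function.Injective.prodMap (Set.inclusion_injective _) Function.injective_id)
      have hne : Set.range g ≠ Set.univ := by
        intro h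
        rw [h, Cardinal.mk_univ] at hgcard
        exact lt_irrefl _ hgcard
      obtain ⟨c, hc⟩ : ∃ c : B ⧸ M, c ∉ Set.range g := by
        by_contra hcon
        push_neg at hcon
        exact hne (Set.eq_univ_iff_forall.mpr hcon)
      obtain ⟨t, ht⟩ := Ideal.Quotient.mk_surjective c
      -- t works for all pairs from C₁ × D
      have htgood : ∀ P ∈ C₁, ∀ r ∈ D, t * a - r ∉ P := by
        intro P hP r hr hbad
        have hex : ∃ t' : B, t' * a - r ∈ P := ⟨t, hbad⟩
        have ht₀ := hex.choose_spec
        have hdiff : (t - hex.choose) * a ∈ P := by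
          have : (t - hex.choose) * a = (t * a - r) - (hex.choose * a - r) := by ring
          rw [this]
          exact P.sub_mem hbad ht₀
        have hprime := hC P hP.1
        have htP : t - hex.choose ∈ P :=
          (hprime.mem_or_mem hdiff).resolve_right (haP P hP)
        have hPM : P ≤ M := IsLocalRing.le_maximalIdeal hprime.ne_top
        have : Ideal.Quotient.mk M t = Ideal.Quotient.mk M hex.choose :=
          Ideal.Quotient.eq.mpr (hPM htP)
        apply hc
        refine ⟨⟨⟨P, hP⟩, ⟨r, hr⟩⟩, ?_⟩
        show (if h : ∃ t' : B, t' * a - r ∈ P then Ideal.Quotient.mk M h.choose else 0) = c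
        rw [dif_pos hex, ← this, ht]
      -- now use the inductive hypothesis for C₂ with shifted cosets
      set D'' : Set B := (fun r => r - t * a) '' D with hD''def
      have hcard₂ : Cardinal.mk (C₂ × D'') < Cardinal.mk (B ⧸ M) := by
        refine lt_of_le_of_lt ?_ hcard
        have h1 : Cardinal.mk C₂ ≤ Cardinal.mk C :=
          Cardinal.mk_le_mk_of_subset (fun P hP => hP.1)
        have h2 : Cardinal.mk D'' ≤ Cardinal.mk D := Cardinal.mk_image_le
        calc Cardinal.mk (C₂ × D'') = Cardinal.mk C₂ * Cardinal.mk D'' := by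
              rw [Cardinal.mk_prod]; simp
          _ ≤ Cardinal.mk C * Cardinal.mk D := mul_le_mul' h1 h2
          _ = Cardinal.mk (C × D) := by rw [Cardinal.mk_prod]; simp
      obtain ⟨j, hj, hjgood⟩ :=
        ih C₂ (fun P hP => hC P hP.1) (fun P hP => hP.2) D'' hcard₂
      refine ⟨j + t * a, ?_, ?_⟩
      · have h1 : j ∈ Ideal.span ((Finset.cons a s ha : Finset B) : Set B) := by
          refine Ideal.span_mono ?_ hj
          rw [Finset.coe_cons]
          exact Set.subset_insert _ _
        have h2 : t * a ∈ Ideal.span ((Finset.cons a s ha : Finset B) : Set B) := by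
          refine Ideal.mul_mem_left _ _ (Ideal.subset_span ?_)
          rw [Finset.coe_cons]
          exact Set.mem_insert _ _
        exact Ideal.add_mem _ h1 h2
      · intro P hP r hr hbad
        by_cases hPs : Ideal.span (s : Set B) ≤ P
        · -- P ∈ C₁ : j ∈ P, so t*a - r ∈ P, contradiction with htgood
          have hP₁ : P ∈ C₁ := ⟨hP, hPs⟩
          have hjP : j ∈ P := hPs hj
          have : t * a - r ∈ P := by
            have : t * a - r = (j + t * a - r) - j := by ring
            rw [this]
            exact P.sub_mem hbad hjP
          exact htgood P hP₁ r hr this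
        · -- P ∈ C₂ : use hjgood
          have hP₂ : P ∈ C₂ := ⟨hP, hPs⟩
          have hr'' : r - t * a ∈ D'' := ⟨r, hr, rfl⟩
          refine hjgood P hP₂ (r - t * a) hr'' ?_
          have : j - (r - t * a) = j + t * a - r := by ring
          rw [this]
          exact hbad

/-- Heitmann's generalized prime avoidance: if every ideal in `C` fails to contain `I`
and `|C × D| < |B/M|`, then some element of `I` avoids every coset `P + r`. -/
theorem stmt_0 (B : Type*) [CommRing B] [IsNoetherianRing B] [IsLocalRing B]
    (C : Set (Ideal B)) (hC : ∀ P ∈ C, P.IsPrime)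
    (I : Ideal B) (hI : ∀ P ∈ C, ¬ I ≤ P)
    (D : Set B)
    (hcard : Cardinal.mk (C × D) < Cardinal.mk (B ⧸ IsLocalRing.maximalIdeal B)) :
    ∃ x ∈ I, ∀ P ∈ C, ∀ r ∈ D, x - r ∉ P := by
  obtain ⟨s, hs⟩ := IsNoetherian.noetherian I
  subst hs
  exact heitmann_aux B s C hC hI D hcard
end

section
/- Let B be a reduced local ring with maximal ideal M and at least two distinct minimal prime ideals Q₁ and Q₂. Let R be a subring of B with R ∩ Q₁ = R ∩ Q₂. If x ∈ B is such that the image of x in B/Qᵢ is transcendental over the subring R/(Qᵢ ∩ R) for i = 1, 2, then the polynomial subring R[x] of B satisfies R[x] ∩ Q₁ = R[x] ∩ Q₂. -/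
lemma stmt_2_aux (B : Type*) [CommRing B] (Q₁ Q₂ : Ideal B)
    (R : Subring B) (hglue : ∀ y ∈ R, y ∈ Q₁ → y ∈ Q₂)
    (x : B)
    (htr₁ : ∀ p : Polynomial ↥R,
      Polynomial.eval₂ ((Ideal.Quotient.mk Q₁).comp R.subtype) (Ideal.Quotient.mk Q₁ x) p = 0 →
        ∀ n, ((p.coeff n : ↥R) : B) ∈ Q₁)
    (p : Polynomial ↥R) (h1 : Polynomial.eval₂ R.subtype x p ∈ Q₁) :
    Polynomial.eval₂ R.subtype x p ∈ Q₂ := by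
  have h0 : Polynomial.eval₂ ((Ideal.Quotient.mk Q₁).comp R.subtype)
      (Ideal.Quotient.mk Q₁ x) p = 0 := by
    rw [← Polynomial.hom_eval₂]
    exact (Ideal.Quotient.eq_zero_iff_mem).mpr h1
  have hc := htr₁ p h0
  have hc2 : ∀ n, ((p.coeff n : ↥R) : B) ∈ Q₂ :=
    fun n => hglue _ (p.coeff n).2 (hc n)
  rw [Polynomial.eval₂_eq_sum, Polynomial.sum]
  exact Ideal.sum_mem _ fun n _ => Q₂.mul_mem_right _ (hc2 n)

/-- If `R ∩ Q₁ = R ∩ Q₂` and the image of `x` in `B/Qᵢ` is transcendental over the image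
of `R` for `i = 1, 2`, then `R[x] ∩ Q₁ = R[x] ∩ Q₂`. -/
theorem stmt_2 (B : Type*) [CommRing B] [IsNoetherianRing B] [IsLocalRing B] [IsReduced B]
    (Q₁ Q₂ : Ideal B) (hQ₁ : Q₁ ∈ minimalPrimes B) (hQ₂ : Q₂ ∈ minimalPrimes B)
    (hne : Q₁ ≠ Q₂)
    (R : Subring B) (hglue : ∀ y ∈ R, y ∈ Q₁ ↔ y ∈ Q₂)
    (x : B)
    (htr₁ : ∀ p : Polynomial ↥R,
      Polynomial.eval₂ ((Ideal.Quotient.mk Q₁).comp R.subtype) (Ideal.Quotient.mk Q₁ x) p = 0 →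
        ∀ n, ((p.coeff n : ↥R) : B) ∈ Q₁)
    (htr₂ : ∀ p : Polynomial ↥R,
      Polynomial.eval₂ ((Ideal.Quotient.mk Q₂).comp R.subtype) (Ideal.Quotient.mk Q₂ x) p = 0 →
        ∀ n, ((p.coeff n : ↥R) : B) ∈ Q₂) :
    ∀ y ∈ Subring.closure (insert x (R : Set B)), (y ∈ Q₁ ↔ y ∈ Q₂) := by
  intro y hy
  have hy' : y ∈ (Polynomial.eval₂RingHom R.subtype x).range := by
    refine Subring.closure_le.mpr ?_ hy
    rintro z (rfl | hz)
    · exact ⟨Polynomial.X, by simp⟩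
    · exact ⟨Polynomial.C ⟨z, hz⟩, by simp⟩
  obtain ⟨p, rfl⟩ := hy'
  simp only [Polynomial.coe_eval₂RingHom]
  exact ⟨stmt_2_aux B Q₁ Q₂ R (fun y hy => (hglue y hy).mp) x htr₁ p,
    stmt_2_aux B Q₂ Q₁ R (fun y hy => (hglue y hy).mpr) x htr₂ p⟩
end

section
/- Let B be a reduced local ring with maximal ideal M such that B/M is uncountable, and let Q₁, Q₂ be distinct minimal prime ideals of B. Let R be an infinite subring of B with |R| < |B/M| and R ∩ Q₁ = R ∩ Q₂. Let b ∈ B, let z ∈ B with z ∉ Q₁ and z ∉ Q₂, and let J be an ideal of B with J ⊄ Q₁ and J ⊄ Q₂. Then there exists w ∈ J such that the subring R[b + zw] of B satisfies R[b+zw] ∩ Q₁ = R[b+zw] ∩ Q₂ and |R[b+zw]| = |R|. -/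
/-!
Pick `a ∈ J` outside `Q₁ ∪ Q₂` and look for `w = a t`. For a polynomial `p` over `R` and
`Q ∈ {Q₁, Q₂}`, either all coefficients of `p` lie in `Q`, or `p (b + z a t) ∈ Q` pins `t mod Q`
down to the finitely many roots of a nonzero polynomial over the domain `B ⧸ Q`, and hence
`t mod M` to a finite set. There are only `|R|` polynomials, so some residue class mod `M`
avoids all of these finite sets. For such `t`, membership of `p (b + z a t)` in `Q₁` and in `Q₂`
is decided by the coefficients of `p`, which lie in `R`, where `Q₁` and `Q₂` agree.
-/

open Polynomial Cardinal

universe u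

theorem Polynomial.eval_mem_of_forall_coeff_mem {B : Type*} [CommRing B] {I : Ideal B} {P : B[X]}
    (h : ∀ n, P.coeff n ∈ I) (x : B) : P.eval x ∈ I := by
  rw [eval_eq_sum_range]
  exact Ideal.sum_mem _ fun n _ => I.mul_mem_right _ (h n)

theorem Polynomial.finite_image_mk_setOf_eval_affine_mem {B : Type*} [CommRing B] {Q M : Ideal B}
    [Q.IsPrime] (hQM : Q ≤ M) {P : B[X]} (hP : ∃ n, P.coeff n ∉ Q) {c u : B} (hu : u ∉ Q) :
    (Ideal.Quotient.mk M '' {t | P.eval (c + u * t) ∈ Q}).Finite := by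
  have hP' : P.map (Ideal.Quotient.mk Q) ≠ 0 := by
    obtain ⟨n, hn⟩ := hP
    refine fun h => hn ?_
    simpa [← Ideal.Quotient.eq_zero_iff_mem] using congrArg (coeff · n) h
  have hu' : Ideal.Quotient.mk Q u ≠ 0 := by rwa [Ne, Ideal.Quotient.eq_zero_iff_mem]
  have hinj : Function.Injective fun s => Ideal.Quotient.mk Q c + Ideal.Quotient.mk Q u * s :=
    (add_right_injective _).comp (mul_right_injective₀ hu')
  refine (((finite_setOfPred_isRoot hP').preimage hinj.injOn).image
    (Ideal.Quotient.factor hQM)).subset ?_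
  rintro _ ⟨t, ht, rfl⟩
  refine ⟨Ideal.Quotient.mk Q t, ?_, Ideal.Quotient.factor_mk hQM t⟩
  simpa [IsRoot, ← map_mul, ← map_add, eval_map_apply, Ideal.Quotient.eq_zero_iff_mem] using ht

theorem Ideal.exists_forall_eval_affine_mem_iff_forall_coeff_mem {B ι : Type u} {κ : Type*}
    [CommRing B] [Infinite ι] [Finite κ] {M : Ideal B} {Q : κ → Ideal B}
    (hQ : ∀ k, (Q k).IsPrime) (hQM : ∀ k, Q k ≤ M) (P : ι → B[X])
    (hι : #ι < #(B ⧸ M)) (c : B) {u : B} (hu : ∀ k, u ∉ Q k) :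
    ∃ t : B, ∀ i k, (P i).eval (c + u * t) ∈ Q k ↔ ∀ n, (P i).coeff n ∈ Q k := by
  set bad : ι → Set (B ⧸ M) := fun i => ⋃ (k) (_ : ∃ n, (P i).coeff n ∉ Q k),
    Ideal.Quotient.mk M '' {t | (P i).eval (c + u * t) ∈ Q k}
  have hbad : ∀ i, (bad i).Finite := fun i =>
    Set.finite_iUnion fun k => Set.finite_iUnion fun hk =>
      haveI := hQ k; finite_image_mk_setOf_eval_affine_mem (hQM k) hk (hu k)
  have hcard : #(⋃ i, bad i) < #(B ⧸ M) := calc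
    #(⋃ i, bad i) ≤ #ι * ⨆ i, #(bad i) := mk_iUnion_le bad
    _ ≤ #ι * ℵ₀ := by
      gcongr
      exact ciSup_le' fun i => (hbad i).countable.le_aleph0
    _ = #ι := mul_aleph0_eq (aleph0_le_mk ι)
    _ < #(B ⧸ M) := hι
  obtain ⟨tbar, ht⟩ := compl_nonempty_of_mk_lt_mk hcard
  obtain ⟨t, rfl⟩ := Ideal.Quotient.mk_surjective tbar
  refine ⟨t, fun i k => ⟨fun hmem => ?_, fun h => eval_mem_of_forall_coeff_mem h _⟩⟩
  by_contra! hk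
  exact ht (Set.mem_iUnion₂.mpr ⟨i, k, Set.mem_iUnion.mpr ⟨hk, t, hmem, rfl⟩⟩)

theorem Subring.closure_insert_subset_range_eval_map {B : Type*} [CommRing B] (R : Subring B)
    (x : B) : (closure (insert x (R : Set B)) : Set B) ⊆
      Set.range fun p : R[X] => (p.map R.subtype).eval x := by
  have : closure (insert x (R : Set B)) ≤ (eval₂RingHom R.subtype x).range := by
    rw [closure_le]
    rintro y (rfl | hy)
    · exact ⟨X, eval₂_X _ _⟩
    · exact ⟨C ⟨y, hy⟩, eval₂_C _ _⟩
  rintro y hy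
  obtain ⟨p, rfl⟩ := this hy
  exact ⟨p, eval_map _ _⟩

theorem Subring.cardinalMk_closure_insert {B : Type u} [CommRing B] (R : Subring B) [Infinite R]
    (x : B) :
    #(closure (insert x (R : Set B))) = #R := by
  refine le_antisymm ?_ (mk_le_mk_of_subset fun y hy => subset_closure (.inr hy))
  calc #(closure (insert x (R : Set B)))
        ≤ #(Set.range fun p : R[X] => (p.map R.subtype).eval x) :=
          mk_le_mk_of_subset (closure_insert_subset_range_eval_map R x)
    _ ≤ #(R[X]) := mk_range_le
    _ = #R := by rw [cardinalMk_eq_max, max_eq_left (aleph0_le_mk R)]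

theorem stmt_3_general (B : Type*) [CommRing B] [IsLocalRing B]
    (Q₁ Q₂ : Ideal B) (hQ₁ : Q₁ ∈ minimalPrimes B) (hQ₂ : Q₂ ∈ minimalPrimes B)
    (R : Subring B) [Infinite ↥R]
    (hcard : Cardinal.mk ↥R < Cardinal.mk (B ⧸ IsLocalRing.maximalIdeal B))
    (hglue : ∀ y ∈ R, y ∈ Q₁ ↔ y ∈ Q₂)
    (b z : B) (hz₁ : z ∉ Q₁) (hz₂ : z ∉ Q₂)
    (J : Ideal B) (hJ₁ : ¬ J ≤ Q₁) (hJ₂ : ¬ J ≤ Q₂) :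
    ∃ w ∈ J,
      (∀ y ∈ Subring.closure (insert (b + z * w) (R : Set B)), (y ∈ Q₁ ↔ y ∈ Q₂)) ∧
      Cardinal.mk ↥(Subring.closure (insert (b + z * w) (R : Set B))) = Cardinal.mk ↥R := by
  have hQ : ∀ k, (![Q₁, Q₂] k).IsPrime := Fin.forall_fin_two.mpr ⟨hQ₁.1.1, hQ₂.1.1⟩
  obtain ⟨a, haJ, ha⟩ : ∃ a ∈ J, a ∉ (Q₁ : Set B) ∪ Q₂ :=
    Set.not_subset.mp <| by rw [Ideal.subset_union]; tauto
  have hza : ∀ k, z * a ∉ ![Q₁, Q₂] k := Fin.forall_fin_two.mpr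
    ⟨hQ₁.1.1.mul_notMem hz₁ fun h => ha (.inl h),
      hQ₂.1.1.mul_notMem hz₂ fun h => ha (.inr h)⟩
  have hcardX : #(R[X]) < #(B ⧸ IsLocalRing.maximalIdeal B) := by
    rwa [cardinalMk_eq_max, max_eq_left (aleph0_le_mk R)]
  obtain ⟨t, ht⟩ := Ideal.exists_forall_eval_affine_mem_iff_forall_coeff_mem hQ
    (fun k => IsLocalRing.le_maximalIdeal (hQ k).ne_top) (fun p : R[X] => p.map R.subtype)
    hcardX b hza
  refine ⟨a * t, J.mul_mem_right t haJ, fun y hy => ?_, Subring.cardinalMk_closure_insert R _⟩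
  obtain ⟨p, rfl⟩ := Subring.closure_insert_subset_range_eval_map R _ hy
  rw [← mul_assoc]
  have hcoeff : ∀ n, (p.map R.subtype).coeff n ∈ Q₁ ↔ (p.map R.subtype).coeff n ∈ Q₂ :=
    fun n => by simpa only [coeff_map, Subring.coe_subtype] using hglue _ (p.coeff n).2
  exact (ht p 0).trans ((forall_congr' hcoeff).trans (ht p 1).symm)

/-- Adjoining `b + zw` for a suitable `w ∈ J` preserves being an MG-subring. -/
theorem stmt_3 (B : Type*) [CommRing B] [IsNoetherianRing B] [IsLocalRing B] [IsReduced B]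
    [Uncountable (B ⧸ IsLocalRing.maximalIdeal B)]
    (Q₁ Q₂ : Ideal B) (hQ₁ : Q₁ ∈ minimalPrimes B) (hQ₂ : Q₂ ∈ minimalPrimes B)
    (hne : Q₁ ≠ Q₂)
    (R : Subring B) [Infinite ↥R]
    (hcard : Cardinal.mk ↥R < Cardinal.mk (B ⧸ IsLocalRing.maximalIdeal B))
    (hglue : ∀ y ∈ R, y ∈ Q₁ ↔ y ∈ Q₂)
    (b z : B) (hz₁ : z ∉ Q₁) (hz₂ : z ∉ Q₂)
    (J : Ideal B) (hJ₁ : ¬ J ≤ Q₁) (hJ₂ : ¬ J ≤ Q₂) :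
    ∃ w ∈ J,
      (∀ y ∈ Subring.closure (insert (b + z * w) (R : Set B)), (y ∈ Q₁ ↔ y ∈ Q₂)) ∧
      Cardinal.mk ↥(Subring.closure (insert (b + z * w) (R : Set B))) = Cardinal.mk ↥R :=
  stmt_3_general B Q₁ Q₂ hQ₁ hQ₂ R hcard hglue b z hz₁ hz₂ J hJ₁ hJ₂
end

section
/- Let R be a quasi-local subring of a complete local ring (T, M) such that R has maximal ideal R ∩ M, the composite map R → T/M² is surjective, and IT ∩ R = IR for every finitely generated ideal I of R. Then R is Noetherian and the natural homomorphism from the (R ∩ M)-adic completion of R to T is an isomorphism. -/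
/-!
Extension along `R → T` is injective on finitely generated ideals and `T` is Noetherian, so every
ideal of `R` agrees with a finitely generated one. Nakayama applied to `M ⊆ 𝔪T + M²`, where
`𝔪 = R ∩ M`, gives `M = 𝔪T`; hence `Mⁿ = 𝔪ⁿT` contracts to `𝔪ⁿ`, and density of `R` modulo `M`
propagates to density modulo every `Mⁿ`. Thus `R ⧸ 𝔪ⁿ ≅ T ⧸ Mⁿ` compatibly in `n`, and passing to
the inverse limit identifies the `𝔪`-adic completion of `R` with the `M`-adic completion of `T`,
which is `T`.
-/

open Ideal Quotient

theorem isNoetherianRing_of_comap_map_eq {A B : Type*} [CommSemiring A] [CommSemiring B]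
    [IsNoetherianRing B] (f : A →+* B) (h : ∀ I : Ideal A, I.FG → (I.map f).comap f = I) :
    IsNoetherianRing A := by
  classical
  refine (isNoetherianRing_iff_ideal_fg A).2 fun I ↦ ?_
  obtain ⟨s, hsI, hspan⟩ :=
    (Submodule.fg_span_iff_fg_span_finset_subset (f '' I)).1 (IsNoetherian.noetherian (I.map f))
  obtain ⟨u, huI, rfl⟩ := Finset.subset_set_image_iff.1 hsI
  have hu : (span (u : Set A)).FG := ⟨u, rfl⟩
  suffices I ≤ span u from le_antisymm this (span_le.2 huI) ▸ hu
  have hmap : I.map f ≤ (span (u : Set A)).map f := by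
    rw [map_span, ← Finset.coe_image]
    exact hspan.le
  calc I ≤ (I.map f).comap f := le_comap_map
    _ ≤ ((span (u : Set A)).map f).comap f := comap_mono hmap
    _ = span u := h _ hu

section

variable {A B : Type*} [CommRing A] [CommRing B] {f : A →+* B} {I J : Ideal A} {K : Ideal B}

theorem Ideal.Quotient.surjective_mk_comp_iff :
    Function.Surjective ((Ideal.Quotient.mk K).comp f) ↔ ∀ b, ∃ a, b - f a ∈ K :=
  ⟨fun h b ↦ (h (Ideal.Quotient.mk K b)).imp fun _ ha ↦ Ideal.Quotient.eq.1 ha.symm,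
    fun h y ↦ by
      obtain ⟨b, rfl⟩ := Ideal.Quotient.mk_surjective y
      exact (h b).imp fun _ ha ↦ (Ideal.Quotient.eq.2 ha).symm⟩

theorem Ideal.map_eq_of_comap_eq_of_surjective_mk_sq (hK : K.FG) (hjac : K ≤ jacobson ⊥)
    (hJ : K.comap f = J) (hsurj : Function.Surjective ((Ideal.Quotient.mk (K ^ 2)).comp f)) :
    J.map f = K := by
  refine le_antisymm (map_le_iff_le_comap.2 hJ.ge)
    (Submodule.le_of_le_smul_of_le_jacobson_bot hK hjac fun b hb ↦ ?_)
  obtain ⟨a, hba⟩ := surjective_mk_comp_iff.1 hsurj b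
  have haJ : a ∈ J := hJ ▸ by simpa using K.sub_mem hb (pow_le_self two_ne_zero hba)
  rw [smul_eq_mul, ← sq]
  simpa using Submodule.add_mem_sup (mem_map_of_mem f haJ) hba

theorem Ideal.exists_sub_mem_pow_succ_of_map_eq (hJK : J.map f = K)
    (hsurj : ∀ b, ∃ a, b - f a ∈ K) {n : ℕ} {x : B} (hx : x ∈ K ^ n) :
    ∃ a, x - f a ∈ K ^ (n + 1) := by
  rw [← hJK, ← Ideal.map_pow] at hx
  induction hx using Submodule.span_induction with
  | mem x hx =>
    obtain ⟨a, -, rfl⟩ := hx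
    exact ⟨a, by simp⟩
  | zero => exact ⟨0, by simp⟩
  | add x y _ _ hx hy =>
    obtain ⟨a, ha⟩ := hx
    obtain ⟨a', ha'⟩ := hy
    exact ⟨a + a', by simpa [add_sub_add_comm] using add_mem ha ha'⟩
  | smul b x hx ha =>
    obtain ⟨a, ha⟩ := ha
    obtain ⟨c, hc⟩ := hsurj b
    have hxK : x ∈ K ^ n := by rw [← hJK, ← Ideal.map_pow]; exact hx
    refine ⟨c * a, ?_⟩
    have : b • x - f (c * a) = f c * (x - f a) + (b - f c) * x := by
      rw [smul_eq_mul, map_mul]; ring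
    rw [this]
    exact add_mem (mul_mem_left _ _ ha) (pow_succ' K n ▸ mul_mem_mul hc hxK)

theorem Ideal.Quotient.surjective_mk_pow_comp_of_map_eq (hJK : J.map f = K)
    (hsurj : Function.Surjective ((Ideal.Quotient.mk K).comp f)) (n : ℕ) :
    Function.Surjective ((Ideal.Quotient.mk (K ^ n)).comp f) := by
  rw [surjective_mk_comp_iff] at hsurj ⊢
  induction n with
  | zero => simp
  | succ n ih =>
    intro b
    obtain ⟨a, ha⟩ := ih b
    obtain ⟨a', ha'⟩ := exists_sub_mem_pow_succ_of_map_eq hJK hsurj ha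
    exact ⟨a + a', by simpa [sub_sub] using ha'⟩

noncomputable def Ideal.quotientEquivOfComapEq (hcomap : K.comap f = I)
    (hdense : Function.Surjective ((Ideal.Quotient.mk K).comp f)) : A ⧸ I ≃+* B ⧸ K :=
  (quotEquivOfEq (by rw [← hcomap, ← RingHom.comap_ker, mk_ker])).trans
    (RingHom.quotientKerEquivOfSurjective hdense)

@[simp]
theorem Ideal.quotientEquivOfComapEq_mk (hcomap : K.comap f = I)
    (hdense : Function.Surjective ((Ideal.Quotient.mk K).comp f)) (a : A) :
    quotientEquivOfComapEq hcomap hdense (Ideal.Quotient.mk I a) = Ideal.Quotient.mk K (f a) :=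
  rfl

variable (hcomap : ∀ n, (K ^ n).comap f = I ^ n)
  (hdense : ∀ n, Function.Surjective ((Ideal.Quotient.mk (K ^ n)).comp f))

theorem Ideal.factorPow_quotientEquivOfComapEq {m n : ℕ} (hle : m ≤ n) (x : A ⧸ I ^ n) :
    factorPow K hle (quotientEquivOfComapEq (hcomap n) (hdense n) x) =
      quotientEquivOfComapEq (hcomap m) (hdense m) (factorPow I hle x) := by
  obtain ⟨a, rfl⟩ := Ideal.Quotient.mk_surjective x
  simp

namespace AdicCompletion

theorem factorPow_evalₐ {m n : ℕ} (hle : m ≤ n) (x : AdicCompletion I A) :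
    factorPow I hle (evalₐ I n x) = evalₐ I m x := by
  obtain ⟨x, rfl⟩ := mk_surjective I A x
  simp only [evalₐ_mk, factor_mk]
  exact Ideal.mk_eq_mk I hle x

theorem factorPow_comp_quotientEquivOfComapEq_symm_comp_mk {m n : ℕ} (hle : m ≤ n) :
    (factorPow I hle).comp
        (((quotientEquivOfComapEq (hcomap n) (hdense n)).symm : B ⧸ K ^ n →+* A ⧸ I ^ n).comp
          (Ideal.Quotient.mk (K ^ n))) =
      ((quotientEquivOfComapEq (hcomap m) (hdense m)).symm : B ⧸ K ^ m →+* A ⧸ I ^ m).comp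
        (Ideal.Quotient.mk (K ^ m)) := by
  ext b
  apply (quotientEquivOfComapEq (hcomap m) (hdense m)).injective
  simp [← factorPow_quotientEquivOfComapEq]

theorem factorPow_comp_quotientEquivOfComapEq_comp_evalₐ {m n : ℕ} (hle : m ≤ n) :
    (factorPow K hle).comp
        ((quotientEquivOfComapEq (hcomap n) (hdense n) : A ⧸ I ^ n →+* B ⧸ K ^ n).comp
          (evalₐ I n).toRingHom) =
      (quotientEquivOfComapEq (hcomap m) (hdense m) : A ⧸ I ^ m →+* B ⧸ K ^ m).comp
        (evalₐ I m).toRingHom := by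
  ext
  simp [factorPow_quotientEquivOfComapEq, factorPow_evalₐ]

noncomputable def ofComapPowEq : B →+* AdicCompletion I A :=
  liftRingHom I _ (factorPow_comp_quotientEquivOfComapEq_symm_comp_mk hcomap hdense)

@[simp]
theorem evalₐ_ofComapPowEq (n : ℕ) (b : B) :
    evalₐ I n (ofComapPowEq hcomap hdense b) =
      (quotientEquivOfComapEq (hcomap n) (hdense n)).symm (Ideal.Quotient.mk (K ^ n) b) :=
  evalₐ_liftRingHom I _ (factorPow_comp_quotientEquivOfComapEq_symm_comp_mk hcomap hdense) n b

variable [IsAdicComplete K B]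

noncomputable def liftOfComapPowEq : AdicCompletion I A →+* B :=
  IsAdicComplete.liftRingHom K _ (factorPow_comp_quotientEquivOfComapEq_comp_evalₐ hcomap hdense)

@[simp]
theorem mk_liftOfComapPowEq (n : ℕ) (x : AdicCompletion I A) :
    Ideal.Quotient.mk (K ^ n) (liftOfComapPowEq hcomap hdense x) =
      quotientEquivOfComapEq (hcomap n) (hdense n) (evalₐ I n x) :=
  IsAdicComplete.mk_liftRingHom K _
    (factorPow_comp_quotientEquivOfComapEq_comp_evalₐ hcomap hdense) n x

noncomputable def ringEquivOfComapPowEq : AdicCompletion I A ≃+* B :=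
  .ofRingHom (liftOfComapPowEq hcomap hdense) (ofComapPowEq hcomap hdense)
    (RingHom.ext <| congrFun <| IsHausdorff.funext' K fun n b ↦ by simp)
    (RingHom.ext fun x ↦ ext_evalₐ fun n ↦ by simp)

theorem ringEquivOfComapPowEq_algebraMap (a : A) :
    ringEquivOfComapPowEq hcomap hdense (algebraMap A (AdicCompletion I A) a) = f a :=
  congrFun (IsHausdorff.funext' K
    (f := fun a ↦ ringEquivOfComapPowEq hcomap hdense (algebraMap A (AdicCompletion I A) a))
    (g := f) fun n a ↦ by simp [ringEquivOfComapPowEq]) a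

end AdicCompletion

end

/-- Heitmann: a quasi-local subring of a complete local ring whose map to `T/M²` is onto
and in which finitely generated ideals contract correctly is Noetherian with completion `T`. -/
theorem stmt_4 (T : Type*) [CommRing T] [IsNoetherianRing T] [IsLocalRing T]
    [IsAdicComplete (IsLocalRing.maximalIdeal T) T]
    (R : Subring T) [IsLocalRing ↥R]
    (hmax : IsLocalRing.maximalIdeal ↥R = (IsLocalRing.maximalIdeal T).comap R.subtype)
    (hsurj : Function.Surjective
      ((Ideal.Quotient.mk ((IsLocalRing.maximalIdeal T) ^ 2)).comp R.subtype))
    (hcontr : ∀ I : Ideal ↥R, I.FG → (I.map R.subtype).comap R.subtype = I) :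
    IsNoetherianRing ↥R ∧
      ∃ φ : AdicCompletion (IsLocalRing.maximalIdeal ↥R) ↥R ≃+* T,
        ∀ r : ↥R,
          φ (algebraMap ↥R (AdicCompletion (IsLocalRing.maximalIdeal ↥R) ↥R) r) = (r : T) := by
  have hNoeth : IsNoetherianRing R := isNoetherianRing_of_comap_map_eq R.subtype hcontr
  have hmap : (IsLocalRing.maximalIdeal R).map R.subtype = IsLocalRing.maximalIdeal T :=
    map_eq_of_comap_eq_of_surjective_mk_sq (IsNoetherian.noetherian _)
      (IsAdicComplete.le_jacobson_bot _) hmax.symm hsurj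
  have hcomap (n : ℕ) :
      (IsLocalRing.maximalIdeal T ^ n).comap R.subtype = IsLocalRing.maximalIdeal R ^ n := by
    rw [← hmap, ← Ideal.map_pow, hcontr _ (IsNoetherian.noetherian _)]
  have hdense := surjective_mk_pow_comp_of_map_eq hmap <| surjective_mk_comp_iff.2 fun t ↦
    (surjective_mk_comp_iff.1 hsurj t).imp fun _ ↦ (pow_le_self two_ne_zero ·)
  exact ⟨hNoeth, AdicCompletion.ringEquivOfComapPowEq hcomap hdense,
    AdicCompletion.ringEquivOfComapPowEq_algebraMap hcomap hdense⟩
end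

section
/- Let (B, M) be a Noetherian local ring with B/M uncountable and |B| = |B/M|, and let S be a quasi-local subring of B with maximal ideal S ∩ M such that the map S → B/M² is surjective and IB ∩ S = I for every finitely generated ideal I of S. Then S/(S ∩ M) is uncountable and |S| = |S/(S ∩ M)|. -/
/-- Under the hypotheses of Proposition `completionsame`, if `B/M` is uncountable and
`|B| = |B/M|`, then `S/(S ∩ M)` is uncountable and `|S| = |S/(S ∩ M)|`. -/
theorem stmt_6 (B : Type*) [CommRing B] [IsNoetherianRing B] [IsLocalRing B]
    [Uncountable (B ⧸ IsLocalRing.maximalIdeal B)]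
    (hBcard : Cardinal.mk B = Cardinal.mk (B ⧸ IsLocalRing.maximalIdeal B))
    (S : Subring B) [IsLocalRing ↥S]
    (hmax : IsLocalRing.maximalIdeal ↥S = (IsLocalRing.maximalIdeal B).comap S.subtype)
    (hsurj : Function.Surjective
      ((Ideal.Quotient.mk ((IsLocalRing.maximalIdeal B) ^ 2)).comp S.subtype))
    (hcontr : ∀ I : Ideal ↥S, I.FG → (I.map S.subtype).comap S.subtype = I) :
    Uncountable (↥S ⧸ (IsLocalRing.maximalIdeal B).comap S.subtype) ∧
      Cardinal.mk ↥S = Cardinal.mk (↥S ⧸ (IsLocalRing.maximalIdeal B).comap S.subtype) := by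
  set M := IsLocalRing.maximalIdeal B with hM
  let f : ↥S →+* B ⧸ M := (Ideal.Quotient.mk M).comp S.subtype
  have hfsurj : Function.Surjective f := by
    intro b
    obtain ⟨b, rfl⟩ := Ideal.Quotient.mk_surjective b
    obtain ⟨s, hs⟩ := hsurj (Ideal.Quotient.mk (M ^ 2) b)
    refine ⟨s, ?_⟩
    have h2 : (s : B) - b ∈ M ^ 2 := by
      rw [← Ideal.Quotient.eq]
      exact hs
    have hmem : (s : B) - b ∈ M := Ideal.pow_le_self two_ne_zero h2
    show (Ideal.Quotient.mk M) (s : B) = Ideal.Quotient.mk M b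
    exact Ideal.Quotient.eq.mpr hmem
  have hker : RingHom.ker f = M.comap S.subtype := by
    ext x
    simp [f, RingHom.mem_ker, Ideal.Quotient.eq_zero_iff_mem]
  have e : (↥S ⧸ M.comap S.subtype) ≃+* (B ⧸ M) := by
    rw [← hker]
    exact RingHom.quotientKerEquivOfSurjective hfsurj
  refine ⟨e.symm.injective.uncountable, ?_⟩
  have h1 : Cardinal.mk (↥S ⧸ M.comap S.subtype) = Cardinal.mk (B ⧸ M) :=
    Cardinal.mk_congr e.toEquiv
  refine le_antisymm ?_ (Cardinal.mk_le_of_surjective Ideal.Quotient.mk_surjective)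
  calc Cardinal.mk ↥S ≤ Cardinal.mk B := Cardinal.mk_le_of_injective S.subtype_injective
    _ = Cardinal.mk (↥S ⧸ M.comap S.subtype) := by rw [hBcard, h1]
end

section
/- Let (B, M) be a Noetherian local ring and let S be a local subring of B, with maximal ideal S ∩ M, whose completion equals the completion of B. Then the map from Spec(B) to Spec(S) sending P to P ∩ S is surjective. -/
lemma adic_eval_algebraMap (R : Type*) [CommRing R] (I : Ideal R) (n : ℕ) (x : R) :
    AdicCompletion.evalₐ I n (algebraMap R (AdicCompletion I R) x) =
      Ideal.Quotient.mk (I ^ n) x := by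
  rw [AlgHom.commutes, Ideal.Quotient.algebraMap_eq]

/-- Contraction: if `x` maps into `q·R̂` then `x ∈ q`, for `R` Noetherian local. -/
lemma adic_contraction (R : Type*) [CommRing R] [IsNoetherianRing R] [IsLocalRing R]
    (q : Ideal R) (x : R)
    (hx : algebraMap R (AdicCompletion (IsLocalRing.maximalIdeal R) R) x ∈
      q.map (algebraMap R (AdicCompletion (IsLocalRing.maximalIdeal R) R))) : x ∈ q := by
  set m : Ideal R := IsLocalRing.maximalIdeal R with hm
  have hxq : ∀ n : ℕ, x ∈ q ⊔ m ^ n := by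
    intro n
    have hcmp : (AdicCompletion.evalₐ m n).toRingHom.comp
        (algebraMap R (AdicCompletion m R)) = Ideal.Quotient.mk (m ^ n) :=
      RingHom.ext fun a => adic_eval_algebraMap R m n a
    have h2 : Ideal.Quotient.mk (m ^ n) x ∈ q.map (Ideal.Quotient.mk (m ^ n)) := by
      have h3 := Ideal.mem_map_of_mem (AdicCompletion.evalₐ m n).toRingHom hx
      rw [Ideal.map_map, hcmp] at h3
      rwa [show (AdicCompletion.evalₐ m n).toRingHom (algebraMap R (AdicCompletion m R) x)
          = Ideal.Quotient.mk (m ^ n) x from adic_eval_algebraMap R m n x] at h3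
    obtain ⟨a, ha, hax⟩ :=
      (Ideal.mem_map_iff_of_surjective _ Ideal.Quotient.mk_surjective).mp h2
    have hsub : x - a ∈ m ^ n := by
      have h := Ideal.Quotient.eq.mp hax
      simpa [neg_sub] using (m ^ n).neg_mem h
    have hx' : x = a + (x - a) := by ring
    rw [hx']
    exact Ideal.add_mem _ (Ideal.mem_sup_left ha) (Ideal.mem_sup_right hsub)
  have hmne : m ≠ ⊤ := (IsLocalRing.maximalIdeal.isMaximal R).ne_top
  have hbot : (⨅ n : ℕ, m ^ n • ⊤ : Submodule R (R ⧸ q)) = ⊥ :=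
    Ideal.iInf_pow_smul_eq_bot_of_isLocalRing (I := m) (M := R ⧸ q) hmne
  have hmem : Submodule.Quotient.mk (p := q) x ∈
      (⨅ n : ℕ, m ^ n • ⊤ : Submodule R (R ⧸ q)) := by
    rw [Submodule.mem_iInf]
    intro n
    obtain ⟨a, ha, b, hb, hab⟩ := Submodule.mem_sup.mp (hxq n)
    have he : (Submodule.Quotient.mk x : R ⧸ q) = b • (Submodule.Quotient.mk 1) := by
      have h1 : b • (Submodule.Quotient.mk (1 : R) : R ⧸ q) =
          Submodule.Quotient.mk (b * 1) := rfl
      rw [h1, mul_one, ← hab]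
      exact ((Submodule.Quotient.eq q).mpr (by simpa using ha)).symm
    rw [he]
    exact Submodule.smul_mem_smul hb Submodule.mem_top
  rw [hbot, Submodule.mem_bot] at hmem
  exact (Submodule.Quotient.mk_eq_zero q).mp hmem

/-- Lying over for the completion of a Noetherian local ring. -/
lemma adic_lying_over (R : Type*) [CommRing R] [IsNoetherianRing R] [IsLocalRing R]
    (q : Ideal R) [q.IsPrime] :
    ∃ p : Ideal (AdicCompletion (IsLocalRing.maximalIdeal R) R), p.IsPrime ∧
      p.comap (algebraMap R (AdicCompletion (IsLocalRing.maximalIdeal R) R)) = q := by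
  set m : Ideal R := IsLocalRing.maximalIdeal R with hm
  set f : R →+* AdicCompletion m R := algebraMap R (AdicCompletion m R) with hf
  have hdisj : Disjoint ((q.map f : Ideal (AdicCompletion m R)) : Set (AdicCompletion m R))
      ((q.primeCompl.map f : Submonoid (AdicCompletion m R)) : Set (AdicCompletion m R)) := by
    rw [Set.disjoint_left]
    rintro a ha ⟨s, hs, rfl⟩
    exact hs (adic_contraction R q s ha)
  obtain ⟨p, hp, hle, hpd⟩ := Ideal.exists_le_prime_disjoint (q.map f) _ hdisj
  refine ⟨p, hp, ?_⟩
  ext s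
  rw [Ideal.mem_comap]
  constructor
  · intro hs
    by_contra hsq
    exact Set.disjoint_left.mp hpd hs ⟨s, hsq, rfl⟩
  · intro hs
    exact hle (Ideal.mem_map_of_mem f hs)

/-- If a local subring `S` of a local ring `B` has the same completion as `B`
(compatibly with the inclusion), then `P ↦ P ∩ S` from `Spec B` to `Spec S` is surjective. -/
theorem stmt_7 (B : Type*) [CommRing B] [IsNoetherianRing B] [IsLocalRing B]
    (S : Subring B) [IsLocalRing ↥S] [IsNoetherianRing ↥S]
    (hmax : IsLocalRing.maximalIdeal ↥S = (IsLocalRing.maximalIdeal B).comap S.subtype)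
    (hcomp : ∃ φ : AdicCompletion (IsLocalRing.maximalIdeal ↥S) ↥S ≃+*
        AdicCompletion (IsLocalRing.maximalIdeal B) B,
      ∀ s : ↥S,
        φ (algebraMap ↥S (AdicCompletion (IsLocalRing.maximalIdeal ↥S) ↥S) s) =
          algebraMap B (AdicCompletion (IsLocalRing.maximalIdeal B) B) (s : B)) :
    ∀ q : Ideal ↥S, q.IsPrime → ∃ P : Ideal B, P.IsPrime ∧ P.comap S.subtype = q := by
  intro q hq
  haveI := hq
  obtain ⟨φ, hφ⟩ := hcomp
  obtain ⟨p, hp, hpc⟩ := adic_lying_over ↥S q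
  let g : B →+* AdicCompletion (IsLocalRing.maximalIdeal ↥S) ↥S :=
    (φ.symm : AdicCompletion (IsLocalRing.maximalIdeal B) B →+*
      AdicCompletion (IsLocalRing.maximalIdeal ↥S) ↥S).comp
      (algebraMap B (AdicCompletion (IsLocalRing.maximalIdeal B) B))
  have hgf : g.comp S.subtype =
      algebraMap ↥S (AdicCompletion (IsLocalRing.maximalIdeal ↥S) ↥S) := by
    refine RingHom.ext fun s => ?_
    show φ.symm (algebraMap B (AdicCompletion (IsLocalRing.maximalIdeal B) B) (s : B)) = _
    rw [← hφ s, RingEquiv.symm_apply_apply]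
  refine ⟨p.comap g, Ideal.IsPrime.comap g, ?_⟩
  rw [Ideal.comap_comap, hgf, hpc]
end

section
/- Let (B, M) be a Noetherian local ring and let S be a local subring of B with maximal ideal S ∩ M such that the completion of S equals the completion of B. If Q is a minimal prime ideal of B, then S ∩ Q is a minimal prime ideal of S. -/
/-!
`B → B̂` is injective (Krull's intersection theorem), so every minimal prime `Q` of `B` is the
contraction of a minimal prime `q` of `B̂ ≅ Ŝ`. Since `S → Ŝ` is flat, it satisfies going-down,
and going-down maps minimal primes to minimal primes; the contraction of `q` to `S` is `S ∩ Q`.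
-/

theorem Ideal.under_mem_minimalPrimes {R T : Type*} [CommRing R] [CommRing T] [Algebra R T]
    [Algebra.HasGoingDown R T] {q : Ideal T} (hq : q ∈ minimalPrimes T) :
    q.under R ∈ minimalPrimes R := by
  have := hq.isPrime
  refine ⟨⟨inferInstance, bot_le⟩, fun p ⟨hp, _⟩ hpq ↦ ?_⟩
  obtain ⟨P, hPq, hP, hPp⟩ :=
    Ideal.exists_ideal_le_liesOver_of_le (p := p) (q := q.under R) q hpq
  rw [hPp.over]
  exact Ideal.comap_mono (hq.2 ⟨hP, bot_le⟩ hPq)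

theorem Ideal.exists_minimalPrimes_comap_eq_of_injective {R T : Type*} [CommRing R] [CommRing T]
    {f : R →+* T} (hf : Function.Injective f) {p : Ideal R} (hp : p ∈ minimalPrimes R) :
    ∃ q ∈ minimalPrimes T, q.comap f = p :=
  Ideal.exists_minimalPrimes_comap_eq f p (by rwa [Ideal.comap_bot_of_injective f hf])

theorem RingEquiv.comap_mem_minimalPrimes {R T : Type*} [CommRing R] [CommRing T] (e : R ≃+* T)
    {q : Ideal T} (hq : q ∈ minimalPrimes T) : q.comap e ∈ minimalPrimes R := by
  have := Ideal.minimalPrimes_comap_of_surjective (f := (e : R →+* T)) e.surjective hq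
  rwa [Ideal.comap_bot_of_injective (e : R →+* T) e.injective, Ideal.comap_coe] at this

theorem stmt_8_general (B : Type*) [CommRing B] [IsNoetherianRing B] [IsLocalRing B]
    (S : Subring B) [IsLocalRing ↥S] [IsNoetherianRing ↥S]
    (hcomp : ∃ φ : AdicCompletion (IsLocalRing.maximalIdeal ↥S) ↥S ≃+*
        AdicCompletion (IsLocalRing.maximalIdeal B) B,
      ∀ s : ↥S,
        φ (algebraMap ↥S (AdicCompletion (IsLocalRing.maximalIdeal ↥S) ↥S) s) =
          algebraMap B (AdicCompletion (IsLocalRing.maximalIdeal B) B) (s : B)) :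
    ∀ Q : Ideal B, Q ∈ minimalPrimes B → Q.comap S.subtype ∈ minimalPrimes ↥S := by
  intro Q hQ
  obtain ⟨φ, hφ⟩ := hcomp
  obtain ⟨q, hq, rfl⟩ := Ideal.exists_minimalPrimes_comap_eq_of_injective
    (f := algebraMap B (AdicCompletion (IsLocalRing.maximalIdeal B) B))
    (AdicCompletion.of_injective _ B) hQ
  convert Ideal.under_mem_minimalPrimes (R := S) (φ.comap_mem_minimalPrimes hq) using 1
  ext s
  simp [hφ]

/-- If a local subring `S` of a local ring `B` has the same completion as `B`
(compatibly with the inclusion), then the contraction of a minimal prime of `B` is a minimal prime of `S`. -/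
theorem stmt_8 (B : Type*) [CommRing B] [IsNoetherianRing B] [IsLocalRing B]
    (S : Subring B) [IsLocalRing ↥S] [IsNoetherianRing ↥S]
    (hmax : IsLocalRing.maximalIdeal ↥S = (IsLocalRing.maximalIdeal B).comap S.subtype)
    (hcomp : ∃ φ : AdicCompletion (IsLocalRing.maximalIdeal ↥S) ↥S ≃+*
        AdicCompletion (IsLocalRing.maximalIdeal B) B,
      ∀ s : ↥S,
        φ (algebraMap ↥S (AdicCompletion (IsLocalRing.maximalIdeal ↥S) ↥S) s) =
          algebraMap B (AdicCompletion (IsLocalRing.maximalIdeal B) B) (s : B)) :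
    ∀ Q : Ideal B, Q ∈ minimalPrimes B → Q.comap S.subtype ∈ minimalPrimes ↥S :=
  stmt_8_general B S hcomp
end

section
/- Let S be a subring of a commutative ring B and let P be a prime ideal of B of positive height such that (S ∩ P)B = P. Then S ∩ P is not a minimal prime ideal of S. -/
/-- If `P` is a prime of `B` of positive height (i.e. not a minimal prime) with
`(S ∩ P)B = P`, then `S ∩ P` is not a minimal prime of `S`. -/
theorem stmt_9 (B : Type*) [CommRing B] [IsNoetherianRing B]
    (S : Subring B) (P : Ideal B) (hP : P.IsPrime) (hht : P ∉ minimalPrimes B)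
    (hgen : Ideal.map S.subtype (P.comap S.subtype) = P) :
    P.comap S.subtype ∉ minimalPrimes ↥S := by
  intro hmin
  obtain ⟨Q, hQmin, hQle⟩ := Ideal.exists_minimalPrimes_le (bot_le : (⊥ : Ideal B) ≤ P)
  have hQprime : Q.IsPrime := hQmin.1.1
  have hle : Q.comap S.subtype ≤ P.comap S.subtype := Ideal.comap_mono hQle
  have heq : P.comap S.subtype ≤ Q.comap S.subtype :=
    hmin.2 ⟨Ideal.comap_isPrime _ Q, bot_le⟩ hle
  have hPQ : P ≤ Q := by
    rw [← hgen]
    exact Ideal.map_le_iff_le_comap.mpr heq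
  have : P = Q := le_antisymm hPQ hQle
  exact hht (this ▸ hQmin)
end

section
/- Let B be a reduced local ring with maximal ideal M and distinct minimal primes Q₁, Q₂, and let R ⊆ B be a subring with R ∩ Q₁ = R ∩ Q₂. Let a ∈ R with a ∉ Q₁ and a ∉ Q₂, and let u ∈ B with au ∈ R. Then R[u] ∩ Q₁ = R[u] ∩ Q₂. -/
/-- If `a ∈ R` avoids both minimal primes and `au ∈ R`, then adjoining `u` to `R`
preserves `R ∩ Q₁ = R ∩ Q₂`. -/
theorem stmt_11 (B : Type*) [CommRing B] [IsNoetherianRing B] [IsLocalRing B] [IsReduced B]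
    (Q₁ Q₂ : Ideal B) (hQ₁ : Q₁ ∈ minimalPrimes B) (hQ₂ : Q₂ ∈ minimalPrimes B)
    (hne : Q₁ ≠ Q₂)
    (R : Subring B) (hglue : ∀ y ∈ R, y ∈ Q₁ ↔ y ∈ Q₂)
    (a : B) (haR : a ∈ R) (ha₁ : a ∉ Q₁) (ha₂ : a ∉ Q₂)
    (u : B) (hau : a * u ∈ R) :
    ∀ y ∈ Subring.closure (insert u (R : Set B)), (y ∈ Q₁ ↔ y ∈ Q₂) := by
  have hp₁ : Q₁.IsPrime := hQ₁.1.1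
  have hp₂ : Q₂.IsPrime := hQ₂.1.1
  have key : ∀ y ∈ Subring.closure (insert u (R : Set B)), ∃ n : ℕ, a ^ n * y ∈ R := by
    intro y hy
    induction hy using Subring.closure_induction with
    | mem x hx =>
      rcases hx with rfl | hx
      · exact ⟨1, by simpa using hau⟩
      · exact ⟨0, by simpa using hx⟩
    | zero => exact ⟨0, by simpa using R.zero_mem⟩
    | one => exact ⟨0, by simpa using R.one_mem⟩
    | add x y _ _ hx hy =>
      obtain ⟨n, hn⟩ := hx
      obtain ⟨m, hm⟩ := hy
      refine ⟨n + m, ?_⟩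
      have : a ^ (n + m) * (x + y) = a ^ m * (a ^ n * x) + a ^ n * (a ^ m * y) := by ring
      rw [this]
      exact R.add_mem (R.mul_mem (R.pow_mem haR m) hn) (R.mul_mem (R.pow_mem haR n) hm)
    | neg x _ hx =>
      obtain ⟨n, hn⟩ := hx
      exact ⟨n, by simpa using R.neg_mem hn⟩
    | mul x y _ _ hx hy =>
      obtain ⟨n, hn⟩ := hx
      obtain ⟨m, hm⟩ := hy
      refine ⟨n + m, ?_⟩
      have : a ^ (n + m) * (x * y) = (a ^ n * x) * (a ^ m * y) := by ring
      rw [this]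
      exact R.mul_mem hn hm
  intro y hy
  obtain ⟨n, hn⟩ := key y hy
  have han₁ : a ^ n ∉ Q₁ := fun h => ha₁ (hp₁.mem_of_pow_mem n h)
  have han₂ : a ^ n ∉ Q₂ := fun h => ha₂ (hp₂.mem_of_pow_mem n h)
  constructor
  · intro h
    have : a ^ n * y ∈ Q₂ := (hglue _ hn).mp (Q₁.mul_mem_left _ h)
    rcases hp₂.mem_or_mem this with h' | h'
    · exact absurd h' han₂
    · exact h'
  · intro h
    have : a ^ n * y ∈ Q₁ := (hglue _ hn).mpr (Q₂.mul_mem_left _ h)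
    rcases hp₁.mem_or_mem this with h' | h'
    · exact absurd h' han₁
    · exact h'
end

section
/- Let (B, M) be a reduced local ring with B/M uncountable and with distinct minimal primes Q₁, Q₂. Let R be an infinite subring of B with |R| < |B/M| and R ∩ Q₁ = R ∩ Q₂. Then for every finitely generated ideal I of R and every c ∈ IB ∩ R, there exists a subring S of B with R ⊆ S, |S| = |R|, S ∩ Q₁ = S ∩ Q₂, and c ∈ IS. -/
/-!
Call a subring `A` glued if `A ∩ Q₁ = A ∩ Q₂`. Write `c = ∑ aᵢ τᵢ` with `τᵢ` the generators of
`I` and `aᵢ ∈ B`; it suffices to move the coefficients into a glued subring of cardinality `#R`.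

An element `x` whose images in `B/Q₁` and `B/Q₂` are transcendental over the image of `A` can be
adjoined to a glued subring `A` without breaking the gluing. Such `x` exist in every coset `a + mB`
with `m ∉ Q₁ ∪ Q₂`: along `z ↦ a + m z` the residue field `B/M` injects into each `B/Qⱼ`, while
only `#A < #(B/M)` classes of `B/Qⱼ` are algebraic over `A`.

If every `τᵢ` lies in `Q₁` (hence in `Q₂`), reducedness and prime avoidance give `mᵢ ∉ Q₁ ∪ Q₂`
with `mᵢ τᵢ = 0`, and `aᵢ` may be replaced by a generic `aᵢ + mᵢ αᵢ`. Otherwise some `τ = τᵢ₀`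
avoids both primes; replace every `aᵢ` by a generic `aᵢ + τ αᵢ` and absorb the error `τ u`,
`u = ∑ αᵢ τᵢ`, into the coefficient of `τᵢ₀` by adjoining `u`. This keeps the gluing because
`τ u` already lies in the ring and `τ` is a nonzerodivisor modulo both primes.
-/

open Cardinal Polynomial

lemma Ideal.mem_map_span_finset_iff {R S : Type*} [CommRing R] [CommRing S] (f : R →+* S)
    (s : Finset R) (x : S) :
    x ∈ (Ideal.span (s : Set R)).map f ↔ ∃ a : s → S, ∑ i, a i * f i = x := by
  rw [Ideal.map_span, ← Ideal.mem_span_range_iff_exists_fun, Set.image_eq_range]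
  rfl

section

variable {B : Type*} [CommRing B]

lemma Ideal.exists_mul_eq_zero_notMem_of_mem_minimalPrimes [IsReduced B]
    {Q : Ideal B} (hQ : Q ∈ minimalPrimes B) {t : B} (ht : t ∈ Q) : ∃ m ∉ Q, m * t = 0 := by
  have := hQ.1.1
  have : Ring.KrullDimLE 0 (Localization.AtPrime Q) := .of_isLocalization _ hQ _
  let : Field (Localization.AtPrime Q) := Ring.KrullDimLE.isField_of_isReduced.toField
  obtain ⟨⟨m, hmQ⟩, hm⟩ := (IsLocalization.map_eq_zero_iff Q.primeCompl (Localization.AtPrime Q)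
    t).mp (by rw [← Ideal.mem_bot, ← IsLocalRing.maximalIdeal_eq_bot,
      ← Localization.AtPrime.map_eq_maximalIdeal]; exact Ideal.mem_map_of_mem _ ht)
  exact ⟨m, hmQ, hm⟩

lemma Ideal.exists_mul_eq_zero_notMem_notMem_of_mem_minimalPrimes [IsReduced B] {Q₁ Q₂ : Ideal B}
    (hQ₁ : Q₁ ∈ minimalPrimes B) (hQ₂ : Q₂ ∈ minimalPrimes B) {t : B} (h₁ : t ∈ Q₁)
    (h₂ : t ∈ Q₂) : ∃ m, m ∉ Q₁ ∧ m ∉ Q₂ ∧ m * t = 0 := by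
  have hann : ∀ Q ∈ minimalPrimes B, t ∈ Q → ¬ (Ideal.span {t}).annihilator ≤ Q := by
    intro Q hQ ht hle
    obtain ⟨m, hmQ, hm⟩ := exists_mul_eq_zero_notMem_of_mem_minimalPrimes hQ ht
    exact hmQ (hle ((Submodule.mem_annihilator_span_singleton _ _).2 hm))
  have : ¬ ((Ideal.span {t}).annihilator : Set B) ⊆ Q₁ ∪ Q₂ := by
    rw [Ideal.subset_union]
    exact not_or.2 ⟨hann _ hQ₁ h₁, hann _ hQ₂ h₂⟩
  obtain ⟨m, hm, hmQ⟩ := Set.not_subset.1 this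
  rw [Set.mem_union, not_or] at hmQ
  exact ⟨m, hmQ.1, hmQ.2, (Submodule.mem_annihilator_span_singleton _ _).1 hm⟩

lemma Subring.le_toSubring_adjoin (A : Subring B) (s : Set B) :
    A ≤ (Algebra.adjoin A s).toSubring :=
  fun y hy => Subalgebra.algebraMap_mem _ (⟨y, hy⟩ : A)

lemma Subring.cardinalMk_toSubring_adjoin_singleton (A : Subring B) [Infinite A] (x : B) :
    #(Algebra.adjoin A {x}).toSubring = #A := by
  refine le_antisymm ?_ (mk_le_mk_of_subset (A.le_toSubring_adjoin {x}))
  calc #(Algebra.adjoin A {x}).toSubring ≤ #A ⊔ #({x} : Set B) ⊔ ℵ₀ :=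
        Algebra.cardinalMk_adjoin_le A {x}
    _ = #A := by simp [aleph0_le_mk A, one_le_aleph0.trans (aleph0_le_mk A)]

lemma Subring.exists_pow_mul_mem_of_mem_adjoin {A : Subring B} {t b : B} (ht : t ∈ A)
    (htb : t * b ∈ A) {y : B} (hy : y ∈ Algebra.adjoin A {b}) : ∃ n : ℕ, t ^ n * y ∈ A := by
  obtain ⟨n, hn⟩ := Algebra.pow_smul_mem_of_smul_subset_of_mem_adjoin (⟨t, ht⟩ : A) {b} ⊥
    (by rw [Set.smul_set_singleton, Set.singleton_subset_iff]
        exact Algebra.mem_bot.2 ⟨⟨_, htb⟩, rfl⟩)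
    hy (Subalgebra.algebraMap_mem _ _)
  obtain ⟨a, ha⟩ := Algebra.mem_bot.1 (hn n le_rfl)
  exact ⟨n, (show (a : B) = t ^ n * y from ha) ▸ a.2⟩

def IsTranscendentalMod (A : Subring B) (Q : Ideal B) (x : B) : Prop :=
  ∀ p : A[X], aeval (Ideal.Quotient.mk Q x) p = 0 → p.map (algebraMap A (B ⧸ Q)) = 0

def algebraicMod (A : Subring B) (Q : Ideal B) [Q.IsPrime] : Set (B ⧸ Q) :=
  ⋃ p : A[X], {z | z ∈ (p.map (algebraMap A (B ⧸ Q))).roots}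

lemma map_algebraMap_quotient_eq_zero_iff {A : Subring B} {Q : Ideal B} {p : A[X]} :
    p.map (algebraMap A (B ⧸ Q)) = 0 ↔ ∀ i, (p.coeff i : B) ∈ Q := by
  simp only [Polynomial.ext_iff, coeff_map, coeff_zero]
  exact forall_congr' fun _ => Ideal.Quotient.eq_zero_iff_mem

lemma mk_aeval_eq_zero_iff {A : Subring B} {Q : Ideal B} {p : A[X]} {x : B} :
    aeval (Ideal.Quotient.mk Q x) p = 0 ↔ aeval x p ∈ Q := by
  rw [← Ideal.Quotient.eq_zero_iff_mem, ← Ideal.Quotient.mkₐ_eq_mk A, ← aeval_algHom_apply]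

lemma mem_of_mem_adjoin_of_isTranscendentalMod {A : Subring B} {Q Q' : Ideal B}
    (hA : ∀ y ∈ A, y ∈ Q → y ∈ Q') {x : B} (hx : IsTranscendentalMod A Q x) {y : B}
    (hy : y ∈ Algebra.adjoin A {x}) (hyQ : y ∈ Q) : y ∈ Q' := by
  obtain ⟨p, rfl⟩ : ∃ p : A[X], aeval x p = y := by
    rwa [Algebra.adjoin_singleton_eq_range_aeval] at hy
  have hcoeff := map_algebraMap_quotient_eq_zero_iff.1 (hx p (mk_aeval_eq_zero_iff.2 hyQ))
  rw [← mk_aeval_eq_zero_iff, aeval_def, eval₂_eq_eval_map,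
    map_algebraMap_quotient_eq_zero_iff.2 fun i => hA _ (p.coeff i).2 (hcoeff i), eval_zero]

lemma mem_of_mem_adjoin_of_mul_mem {A : Subring B} {Q Q' : Ideal B} [Q'.IsPrime]
    (hA : ∀ y ∈ A, y ∈ Q → y ∈ Q') {t b : B} (ht : t ∈ A) (htQ' : t ∉ Q') (htb : t * b ∈ A)
    {y : B} (hy : y ∈ Algebra.adjoin A {b}) (hyQ : y ∈ Q) : y ∈ Q' := by
  obtain ⟨n, hn⟩ := Subring.exists_pow_mul_mem_of_mem_adjoin ht htb hy
  have := hA _ hn (Q.mul_mem_left _ hyQ)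
  exact ((Ideal.IsPrime.mem_or_mem ‹_› this).resolve_left
    fun h => htQ' (Ideal.IsPrime.mem_of_pow_mem ‹_› _ h))

lemma cardinalMk_algebraicMod_le (A : Subring B) [Infinite A] (Q : Ideal B) [Q.IsPrime] :
    #(algebraicMod A Q) ≤ #A :=
  calc #(algebraicMod A Q)
      ≤ #A[X] * ⨆ p : A[X], #{z | z ∈ (p.map (algebraMap A (B ⧸ Q))).roots} := mk_iUnion_le _
    _ ≤ #A * ℵ₀ := by
        rw [cardinalMk_eq_max, max_eq_left (aleph0_le_mk A)]
        exact mul_le_mul' le_rfl (ciSup_le' fun p => (Multiset.finite_toSet _).lt_aleph0.le)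
    _ = #A := mul_aleph0_eq (aleph0_le_mk A)

lemma isTranscendentalMod_of_mk_notMem_algebraicMod {A : Subring B} {Q : Ideal B} [Q.IsPrime]
    {x : B} (hx : Ideal.Quotient.mk Q x ∉ algebraicMod A Q) : IsTranscendentalMod A Q x := by
  intro p hp
  by_contra hne
  refine hx (Set.mem_iUnion.2 ⟨p, ?_⟩)
  rw [Set.mem_ofPred_eq, mem_roots hne, IsRoot, ← eval₂_eq_eval_map, ← aeval_def]
  exact hp

def IsGlued (Q₁ Q₂ : Ideal B) (A : Subring B) : Prop := ∀ y ∈ A, y ∈ Q₁ ↔ y ∈ Q₂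

lemma IsGlued.adjoin_of_isTranscendentalMod {Q₁ Q₂ : Ideal B} {A : Subring B}
    (hA : IsGlued Q₁ Q₂ A) {x : B} (h₁ : IsTranscendentalMod A Q₁ x)
    (h₂ : IsTranscendentalMod A Q₂ x) : IsGlued Q₁ Q₂ (Algebra.adjoin A {x}).toSubring :=
  fun _ hy => ⟨mem_of_mem_adjoin_of_isTranscendentalMod (fun z hz => (hA z hz).1) h₁ hy,
    mem_of_mem_adjoin_of_isTranscendentalMod (fun z hz => (hA z hz).2) h₂ hy⟩

lemma IsGlued.adjoin_of_mul_mem {Q₁ Q₂ : Ideal B} [Q₁.IsPrime] [Q₂.IsPrime] {A : Subring B}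
    (hA : IsGlued Q₁ Q₂ A) {t u : B} (ht : t ∈ A) (h₁ : t ∉ Q₁) (h₂ : t ∉ Q₂) (htu : t * u ∈ A) :
    IsGlued Q₁ Q₂ (Algebra.adjoin A {u}).toSubring :=
  fun _ hy => ⟨mem_of_mem_adjoin_of_mul_mem (fun z hz => (hA z hz).1) ht h₂ htu hy,
    mem_of_mem_adjoin_of_mul_mem (fun z hz => (hA z hz).2) ht h₁ htu hy⟩

lemma injective_mk_add_mul_surjInv {Q P : Ideal B} [Q.IsPrime] (hQP : Q ≤ P) {m : B} (hm : m ∉ Q)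
    (a : B) :
    Function.Injective fun z : B ⧸ P =>
      Ideal.Quotient.mk Q (a + m * Function.surjInv Ideal.Quotient.mk_surjective z) := by
  intro z w h
  rw [Ideal.Quotient.eq, add_sub_add_left_eq_sub, ← mul_sub] at h
  rw [← Function.surjInv_eq Ideal.Quotient.mk_surjective z,
    ← Function.surjInv_eq Ideal.Quotient.mk_surjective w, Ideal.Quotient.eq]
  exact hQP ((Ideal.IsPrime.mem_or_mem ‹_› h).resolve_left hm)

section Extension

open IsLocalRing

variable [IsLocalRing B] {Q₁ Q₂ : Ideal B}

lemma exists_mk_add_mul_notMem [Infinite (B ⧸ maximalIdeal B)] [Q₁.IsPrime] [Q₂.IsPrime]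
    {m : B} (hm₁ : m ∉ Q₁) (hm₂ : m ∉ Q₂) {X₁ : Set (B ⧸ Q₁)} {X₂ : Set (B ⧸ Q₂)}
    (h₁ : #X₁ < #(B ⧸ maximalIdeal B)) (h₂ : #X₂ < #(B ⧸ maximalIdeal B)) (a : B) :
    ∃ α : B, Ideal.Quotient.mk Q₁ (a + m * α) ∉ X₁ ∧ Ideal.Quotient.mk Q₂ (a + m * α) ∉ X₂ := by
  have hf₁ := injective_mk_add_mul_surjInv (le_maximalIdeal Ideal.IsPrime.ne_top') hm₁ a
  have hf₂ := injective_mk_add_mul_surjInv (le_maximalIdeal Ideal.IsPrime.ne_top') hm₂ a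
  have hsmall : #(_ ⁻¹' X₁ ∪ _ ⁻¹' X₂ : Set _) < #(B ⧸ maximalIdeal B) :=
    (mk_union_le _ _).trans_lt <| add_lt_of_lt (aleph0_le_mk _)
      ((mk_preimage_of_injective _ _ hf₁).trans_lt h₁)
      ((mk_preimage_of_injective _ _ hf₂).trans_lt h₂)
  obtain ⟨z, hz⟩ := (Set.ne_univ_iff_exists_notMem _).1 <|
    ne_of_apply_ne (fun s : Set (B ⧸ maximalIdeal B) => #s) (hsmall.ne.trans_eq mk_univ.symm)
  exact ⟨_, not_or.1 hz⟩

lemma exists_isTranscendentalMod_add_mul [Q₁.IsPrime] [Q₂.IsPrime] (A : Subring B) [Infinite A]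
    (hA : #A < #(B ⧸ maximalIdeal B)) {m : B} (hm₁ : m ∉ Q₁) (hm₂ : m ∉ Q₂) (a : B) :
    ∃ α : B, IsTranscendentalMod A Q₁ (a + m * α) ∧ IsTranscendentalMod A Q₂ (a + m * α) := by
  have : Infinite (B ⧸ maximalIdeal B) := infinite_iff.2 ((aleph0_le_mk A).trans hA.le)
  obtain ⟨α, h₁, h₂⟩ := exists_mk_add_mul_notMem hm₁ hm₂
    ((cardinalMk_algebraicMod_le A Q₁).trans_lt hA)
    ((cardinalMk_algebraicMod_le A Q₂).trans_lt hA) a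
  exact ⟨α, isTranscendentalMod_of_mk_notMem_algebraicMod h₁,
    isTranscendentalMod_of_mk_notMem_algebraicMod h₂⟩

lemma exists_extension_add_mul_mem [Q₁.IsPrime] [Q₂.IsPrime] {A : Subring B} [Infinite A]
    (hA : #A < #(B ⧸ maximalIdeal B)) (hglue : IsGlued Q₁ Q₂ A) {m : B} (hm₁ : m ∉ Q₁)
    (hm₂ : m ∉ Q₂) (a : B) :
    ∃ A' : Subring B, A ≤ A' ∧ #A' = #A ∧ IsGlued Q₁ Q₂ A' ∧ ∃ α, a + m * α ∈ A' := by
  obtain ⟨α, h₁, h₂⟩ := exists_isTranscendentalMod_add_mul A hA hm₁ hm₂ a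
  exact ⟨_, A.le_toSubring_adjoin _, A.cardinalMk_toSubring_adjoin_singleton _,
    hglue.adjoin_of_isTranscendentalMod h₁ h₂, α, Algebra.subset_adjoin rfl⟩

lemma exists_extension_forall_add_mul_mem [Q₁.IsPrime] [Q₂.IsPrime] {ι : Type*} [Fintype ι]
    {A : Subring B} [Infinite A] (hA : #A < #(B ⧸ maximalIdeal B)) (hglue : IsGlued Q₁ Q₂ A)
    (a m : ι → B) (hm : ∀ i, m i ∉ Q₁ ∧ m i ∉ Q₂) :
    ∃ A' : Subring B, A ≤ A' ∧ #A' = #A ∧ IsGlued Q₁ Q₂ A' ∧ ∀ i, ∃ α, a i + m i * α ∈ A' := by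
  classical
  suffices ∀ s : Finset ι, ∃ A' : Subring B, A ≤ A' ∧ #A' = #A ∧ IsGlued Q₁ Q₂ A' ∧
      ∀ i ∈ s, ∃ α, a i + m i * α ∈ A' by
    obtain ⟨A', hAA', hcard, hglue', hmem⟩ := this Finset.univ
    exact ⟨A', hAA', hcard, hglue', fun i => hmem i (Finset.mem_univ i)⟩
  intro s
  induction s using Finset.induction_on with
  | empty => exact ⟨A, le_rfl, rfl, hglue, by simp⟩
  | insert j s _ ih =>
    obtain ⟨A', hAA', hcard, hglue', hmem⟩ := ih
    have : Infinite A' := infinite_iff.2 (hcard ▸ aleph0_le_mk A)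
    obtain ⟨A'', hA'A'', hcard', hglue'', α, hα⟩ :=
      exists_extension_add_mul_mem (hcard ▸ hA) hglue' (hm j).1 (hm j).2 (a j)
    refine ⟨A'', hAA'.trans hA'A'', hcard'.trans hcard, hglue'', fun i hi => ?_⟩
    rcases Finset.mem_insert.1 hi with rfl | hi
    · exact ⟨α, hα⟩
    · obtain ⟨β, hβ⟩ := hmem i hi
      exact ⟨β, hA'A'' hβ⟩

lemma exists_extension_sum_mul_eq_of_forall_mem [IsReduced B] (hQ₁ : Q₁ ∈ minimalPrimes B)
    (hQ₂ : Q₂ ∈ minimalPrimes B) {ι : Type*} [Fintype ι] {A : Subring B} [Infinite A]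
    (hA : #A < #(B ⧸ maximalIdeal B)) (hglue : IsGlued Q₁ Q₂ A) {τ : ι → B}
    (hτ : ∀ i, τ i ∈ Q₁ ∧ τ i ∈ Q₂) (a : ι → B) :
    ∃ A' : Subring B, A ≤ A' ∧ #A' = #A ∧ IsGlued Q₁ Q₂ A' ∧
      ∃ a' : ι → B, (∀ i, a' i ∈ A') ∧ ∑ i, a' i * τ i = ∑ i, a i * τ i := by
  have := hQ₁.1.1
  have := hQ₂.1.1
  choose m hm₁ hm₂ hm using fun i =>
    Ideal.exists_mul_eq_zero_notMem_notMem_of_mem_minimalPrimes hQ₁ hQ₂ (hτ i).1 (hτ i).2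
  obtain ⟨A', hAA', hcard, hglue', hmem⟩ :=
    exists_extension_forall_add_mul_mem hA hglue a m fun i => ⟨hm₁ i, hm₂ i⟩
  choose α hα using hmem
  refine ⟨A', hAA', hcard, hglue', fun i => a i + m i * α i, hα, ?_⟩
  refine Finset.sum_congr rfl fun i _ => ?_
  linear_combination α i * hm i

lemma exists_extension_sum_mul_eq_of_notMem [Q₁.IsPrime] [Q₂.IsPrime] {ι : Type*} [Fintype ι]
    {A : Subring B} [Infinite A] (hA : #A < #(B ⧸ maximalIdeal B)) (hglue : IsGlued Q₁ Q₂ A)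
    {τ : ι → B} (hτ : ∀ i, τ i ∈ A) (a : ι → B) (hsum : ∑ i, a i * τ i ∈ A) {i₀ : ι}
    (h₁ : τ i₀ ∉ Q₁) (h₂ : τ i₀ ∉ Q₂) :
    ∃ A' : Subring B, A ≤ A' ∧ #A' = #A ∧ IsGlued Q₁ Q₂ A' ∧
      ∃ a' : ι → B, (∀ i, a' i ∈ A') ∧ ∑ i, a' i * τ i = ∑ i, a i * τ i := by
  classical
  obtain ⟨A', hAA', hcard, hglue', hmem⟩ :=
    exists_extension_forall_add_mul_mem hA hglue a (fun _ => τ i₀) fun _ => ⟨h₁, h₂⟩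
  choose α hα using hmem
  set u := ∑ i, α i * τ i
  have htu : τ i₀ * u = ∑ i, (a i + τ i₀ * α i) * τ i - ∑ i, a i * τ i := by
    simp only [u, Finset.mul_sum, add_mul, Finset.sum_add_distrib]
    ring_nf
  have htuA' : τ i₀ * u ∈ A' := htu ▸
    A'.sub_mem (A'.sum_mem fun i _ => A'.mul_mem (hα i) (hAA' (hτ i))) (hAA' hsum)
  have : Infinite A' := infinite_iff.2 (hcard ▸ aleph0_le_mk A)
  refine ⟨_, hAA'.trans (A'.le_toSubring_adjoin {u}),
    (A'.cardinalMk_toSubring_adjoin_singleton u).trans hcard,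
    hglue'.adjoin_of_mul_mem (hAA' (hτ i₀)) h₁ h₂ htuA',
    fun i => (a i + τ i₀ * α i) - (Pi.single i₀ u : ι → B) i, fun i => ?_, ?_⟩
  · refine sub_mem (A'.le_toSubring_adjoin {u} (hα i)) ?_
    rw [Pi.single_apply]
    split_ifs
    exacts [Algebra.subset_adjoin rfl, zero_mem _]
  · have : ∑ i, (Pi.single i₀ u : ι → B) i * τ i = u * τ i₀ :=
      (Fintype.sum_eq_single i₀ fun i hi => by simp [hi]).trans (by simp)
    rw [Finset.sum_congr rfl fun i _ => sub_mul _ _ _, Finset.sum_sub_distrib, this]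
    linear_combination -htu

lemma exists_extension_sum_mul_eq [IsReduced B] (hQ₁ : Q₁ ∈ minimalPrimes B)
    (hQ₂ : Q₂ ∈ minimalPrimes B) {ι : Type*} [Fintype ι] {A : Subring B} [Infinite A]
    (hA : #A < #(B ⧸ maximalIdeal B)) (hglue : IsGlued Q₁ Q₂ A) {τ : ι → B}
    (hτ : ∀ i, τ i ∈ A) (a : ι → B) (hsum : ∑ i, a i * τ i ∈ A) :
    ∃ A' : Subring B, A ≤ A' ∧ #A' = #A ∧ IsGlued Q₁ Q₂ A' ∧
      ∃ a' : ι → B, (∀ i, a' i ∈ A') ∧ ∑ i, a' i * τ i = ∑ i, a i * τ i := by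
  by_cases h : ∀ i, τ i ∈ Q₁
  · exact exists_extension_sum_mul_eq_of_forall_mem hQ₁ hQ₂ hA hglue
      (fun i => ⟨h i, (hglue _ (hτ i)).1 (h i)⟩) a
  · obtain ⟨i₀, hi₀⟩ := not_forall.1 h
    have := hQ₁.1.1
    have := hQ₂.1.1
    exact exists_extension_sum_mul_eq_of_notMem hA hglue hτ a hsum hi₀
      fun h => hi₀ ((hglue _ (hτ i₀)).2 h)

end Extension

end

theorem stmt_12_general (B : Type*) [CommRing B] [IsLocalRing B] [IsReduced B]
    (Q₁ Q₂ : Ideal B) (hQ₁ : Q₁ ∈ minimalPrimes B) (hQ₂ : Q₂ ∈ minimalPrimes B)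
    (R : Subring B) [Infinite ↥R]
    (hcard : Cardinal.mk ↥R < Cardinal.mk (B ⧸ IsLocalRing.maximalIdeal B))
    (hglue : ∀ y ∈ R, y ∈ Q₁ ↔ y ∈ Q₂)
    (I : Ideal ↥R) (hI : I.FG) (c : ↥R) (hc : (c : B) ∈ I.map R.subtype) :
    ∃ (S : Subring B) (hRS : R ≤ S),
      Cardinal.mk ↥S = Cardinal.mk ↥R ∧
      (∀ y ∈ S, y ∈ Q₁ ↔ y ∈ Q₂) ∧
      (⟨(c : B), hRS c.2⟩ : ↥S) ∈ I.map (Subring.inclusion hRS) := by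
  obtain ⟨s, rfl⟩ := hI
  obtain ⟨a, hac⟩ := (Ideal.mem_map_span_finset_iff _ s _).1 hc
  obtain ⟨S, hRS, hcardS, hglueS, a', ha'S, hsum⟩ := exists_extension_sum_mul_eq hQ₁ hQ₂ hcard
    hglue (τ := fun i : s => ((i : R) : B)) (fun i => (i : R).2) a (hac ▸ c.2)
  refine ⟨S, hRS, hcardS, hglueS, (Ideal.mem_map_span_finset_iff _ s _).2
    ⟨fun i => ⟨a' i, ha'S i⟩, Subtype.ext ?_⟩⟩
  simpa [← hac] using hsum

/-- For an MG-subring `R`, a finitely generated ideal `I` of `R`, and `c ∈ IB ∩ R`,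
there is a larger MG-subring `S` of the same cardinality with `c ∈ IS`. -/
theorem stmt_12 (B : Type*) [CommRing B] [IsNoetherianRing B] [IsLocalRing B] [IsReduced B]
    [Uncountable (B ⧸ IsLocalRing.maximalIdeal B)]
    (Q₁ Q₂ : Ideal B) (hQ₁ : Q₁ ∈ minimalPrimes B) (hQ₂ : Q₂ ∈ minimalPrimes B)
    (hne : Q₁ ≠ Q₂)
    (R : Subring B) [Infinite ↥R]
    (hcard : Cardinal.mk ↥R < Cardinal.mk (B ⧸ IsLocalRing.maximalIdeal B))
    (hglue : ∀ y ∈ R, y ∈ Q₁ ↔ y ∈ Q₂)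
    (I : Ideal ↥R) (hI : I.FG) (c : ↥R) (hc : (c : B) ∈ I.map R.subtype) :
    ∃ (S : Subring B) (hRS : R ≤ S),
      Cardinal.mk ↥S = Cardinal.mk ↥R ∧
      (∀ y ∈ S, y ∈ Q₁ ↔ y ∈ Q₂) ∧
      (⟨(c : B), hRS c.2⟩ : ↥S) ∈ I.map (Subring.inclusion hRS) :=
  stmt_12_general B Q₁ Q₂ hQ₁ hQ₂ R hcard hglue I hI c hc
end

section
/- Let (B, M) be a reduced local ring with B/M uncountable and with distinct minimal primes Q₁, Q₂, and let J be an ideal of B with J ⊄ Q₁ and J ⊄ Q₂. Let R be an infinite subring of B with |R| < |B/M| and R ∩ Q₁ = R ∩ Q₂. Then there exists a subring S of B with R ⊆ S, |S| = |R|, S ∩ Q₁ = S ∩ Q₂, and such that S contains a generating set for J (i.e., the ideal of B generated by S ∩ J equals J). -/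
open Polynomial Cardinal

universe u

section MGAux

variable {B : Type u} [CommRing B]

/-- The set of roots of polynomials over a subring has small cardinality. -/
lemma mg_bad_card {D : Type u} [CommRing D] [IsDomain D] {A : Type u} [CommRing A] [Infinite A]
    (f : A →+* D) :
    #{x : D | ∃ p : Polynomial A, p.map f ≠ 0 ∧ (p.map f).eval x = 0} ≤ #A := by
  have h1 : {x : D | ∃ p : Polynomial A, p.map f ≠ 0 ∧ (p.map f).eval x = 0} ⊆
      ⋃ p : Polynomial A, {x : D | p.map f ≠ 0 ∧ (p.map f).eval x = 0} := by
    intro x hx; obtain ⟨p, hp⟩ := hx; exact Set.mem_iUnion.2 ⟨p, hp⟩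
  refine le_trans (Cardinal.mk_le_mk_of_subset h1) ?_
  refine le_trans (Cardinal.mk_iUnion_le _) ?_
  have h2 : ∀ p : Polynomial A, #{x : D | p.map f ≠ 0 ∧ (p.map f).eval x = 0} ≤ ℵ₀ := by
    intro p
    by_cases hp : p.map f = 0
    · refine le_trans (Cardinal.mk_le_mk_of_subset (t := (∅ : Set D)) ?_) (by simp)
      intro x hx; exact absurd hp hx.1
    · refine le_trans (Cardinal.mk_le_mk_of_subset (t := {x : D | (p.map f).IsRoot x}) ?_) ?_
      · intro x hx; exact hx.2
      · exact ((Polynomial.finite_setOf_isRoot hp).lt_aleph0).le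
  calc #(Polynomial A) * ⨆ p : Polynomial A, #{x : D | p.map f ≠ 0 ∧ (p.map f).eval x = 0}
      ≤ #(Polynomial A) * ℵ₀ := by gcongr; exact ciSup_le' h2
    _ ≤ max #A ℵ₀ * ℵ₀ := by gcongr; exact Polynomial.cardinalMk_le_max
    _ = #A := by
        rw [max_eq_left (Cardinal.aleph0_le_mk A)]
        exact Cardinal.mul_eq_left (Cardinal.aleph0_le_mk A) (Cardinal.aleph0_le_mk A)
          Cardinal.aleph0_ne_zero

/-- Reduction of evaluation to the quotient. -/
lemma mg_quot_eval (T : Subring B) (Q : Ideal B) (s : B) (p : Polynomial ↥T) :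
    Ideal.Quotient.mk Q (aeval s p) =
      (p.map ((Ideal.Quotient.mk Q).comp T.subtype)).eval (Ideal.Quotient.mk Q s) := by
  rw [aeval_def, Polynomial.hom_eval₂, eval_map]; rfl

lemma mg_map_zero_iff (T : Subring B) (Q : Ideal B) (p : Polynomial ↥T) :
    p.map ((Ideal.Quotient.mk Q).comp T.subtype) = 0 ↔ ∀ i, (p.coeff i : B) ∈ Q := by
  simp [Polynomial.ext_iff, coeff_map, Ideal.Quotient.eq_zero_iff_mem]

/-- Glueing property is preserved by adjoining a doubly-transcendental element. -/
lemma mg_adjoin_glue (Q₁ Q₂ : Ideal B) (T : Subring B)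
    (hT : ∀ y ∈ T, y ∈ Q₁ ↔ y ∈ Q₂) (s : B)
    (h₁ : ∀ p : Polynomial ↥T, p.map ((Ideal.Quotient.mk Q₁).comp T.subtype) ≠ 0 →
      (p.map ((Ideal.Quotient.mk Q₁).comp T.subtype)).eval (Ideal.Quotient.mk Q₁ s) ≠ 0)
    (h₂ : ∀ p : Polynomial ↥T, p.map ((Ideal.Quotient.mk Q₂).comp T.subtype) ≠ 0 →
      (p.map ((Ideal.Quotient.mk Q₂).comp T.subtype)).eval (Ideal.Quotient.mk Q₂ s) ≠ 0) :
    ∀ x ∈ (Algebra.adjoin ↥T ({s} : Set B)).toSubring, (x ∈ Q₁ ↔ x ∈ Q₂) := by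
  intro x hx
  rw [Subalgebra.mem_toSubring, Algebra.adjoin_singleton_eq_range_aeval] at hx
  obtain ⟨p, hp⟩ := hx
  replace hp : aeval s p = x := hp
  subst hp
  have key : p.map ((Ideal.Quotient.mk Q₁).comp T.subtype) = 0 ↔
      p.map ((Ideal.Quotient.mk Q₂).comp T.subtype) = 0 := by
    rw [mg_map_zero_iff, mg_map_zero_iff]
    exact forall_congr' fun i => hT _ (p.coeff i).2
  by_cases hz : p.map ((Ideal.Quotient.mk Q₁).comp T.subtype) = 0
  · have hz₂ := key.mp hz
    constructor <;> intro _
    · rw [← Ideal.Quotient.eq_zero_iff_mem, mg_quot_eval, hz₂, eval_zero]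
    · rw [← Ideal.Quotient.eq_zero_iff_mem, mg_quot_eval, hz, eval_zero]
  · have hz₂ : p.map ((Ideal.Quotient.mk Q₂).comp T.subtype) ≠ 0 := fun h => hz (key.mpr h)
    constructor <;> intro hmem
    · exact absurd ((mg_quot_eval T Q₁ s p) ▸ (Ideal.Quotient.eq_zero_iff_mem.2 hmem))
        (h₁ p hz)
    · exact absurd ((mg_quot_eval T Q₂ s p) ▸ (Ideal.Quotient.eq_zero_iff_mem.2 hmem))
        (h₂ p hz₂)

/-- Cardinality of a single adjunction. -/
lemma mg_adjoin_card (T : Subring B) [Infinite ↥T] (s : B) :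
    #↥(Algebra.adjoin ↥T ({s} : Set B)).toSubring = #↥T := by
  apply le_antisymm
  · have hsurj : Function.Surjective
        (fun p : Polynomial ↥T => (⟨aeval s p, by
          rw [Subalgebra.mem_toSubring, Algebra.adjoin_singleton_eq_range_aeval]
          exact ⟨p, rfl⟩⟩ : ↥(Algebra.adjoin ↥T ({s} : Set B)).toSubring)) := by
      rintro ⟨x, hx⟩
      rw [Subalgebra.mem_toSubring, Algebra.adjoin_singleton_eq_range_aeval] at hx
      obtain ⟨p, hp⟩ := hx
      exact ⟨p, Subtype.ext hp⟩
    refine le_trans (Cardinal.mk_le_of_surjective hsurj) ?_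
    refine le_trans Polynomial.cardinalMk_le_max ?_
    rw [max_eq_left (Cardinal.aleph0_le_mk ↥T)]
  · have hinj : Function.Injective
        (fun t : ↥T => (⟨(t : B), by
          rw [Subalgebra.mem_toSubring]
          exact (Algebra.adjoin ↥T ({s} : Set B)).algebraMap_mem t⟩ :
            ↥(Algebra.adjoin ↥T ({s} : Set B)).toSubring)) := by
      intro a b h
      rw [Subtype.mk.injEq] at h
      exact Subtype.ext h
    exact Cardinal.mk_le_of_injective hinj

end MGAux

section MGStep

variable {B : Type u} [CommRing B] [IsLocalRing B]

open IsLocalRing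

lemma mg_step (Q₁ Q₂ : Ideal B) (hp₁ : Q₁.IsPrime) (hp₂ : Q₂.IsPrime)
    (J : Ideal B) (j w c : B) (hjJ : j ∈ J) (hj₁ : j ∉ Q₁) (hj₂ : j ∉ Q₂)
    (hwM : w ∈ maximalIdeal B) (hw₁ : w ∉ Q₁) (hw₂ : w ∉ Q₂)
    (hcJ : c ∈ J)
    (T : Subring B) [Infinite ↥T]
    (hTcard : #↥T < #(B ⧸ maximalIdeal B))
    (hTglue : ∀ y ∈ T, y ∈ Q₁ ↔ y ∈ Q₂) :
    ∃ (s : B) (S : Subring B), T ≤ S ∧ s ∈ S ∧ s ∈ J ∧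
      s - c ∈ maximalIdeal B * J ∧
      #↥S = #↥T ∧ (∀ y ∈ S, y ∈ Q₁ ↔ y ∈ Q₂) := by
  haveI := hp₁
  haveI := hp₂
  have hQ₁M : Q₁ ≤ maximalIdeal B := le_maximalIdeal hp₁.ne_top
  have hQ₂M : Q₂ ≤ maximalIdeal B := le_maximalIdeal hp₂.ne_top
  set M := maximalIdeal B with hM
  -- section of the quotient map
  obtain ⟨pick, hpick⟩ : ∃ pick : (B ⧸ M) → B, ∀ z, Ideal.Quotient.mk M (pick z) = z :=
    ⟨Function.surjInv Ideal.Quotient.mk_surjective,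
      fun z => Function.rightInverse_surjInv Ideal.Quotient.mk_surjective z⟩
  -- the two candidate maps
  set φ₁ : (B ⧸ M) → (B ⧸ Q₁) := fun z => Ideal.Quotient.mk Q₁ (c + j * w * pick z) with hφ₁
  set φ₂ : (B ⧸ M) → (B ⧸ Q₂) := fun z => Ideal.Quotient.mk Q₂ (c + j * w * pick z) with hφ₂
  have hinj : ∀ (Q : Ideal B), Q.IsPrime → j ∉ Q → w ∉ Q → Q ≤ M →
      Function.Injective (fun z => Ideal.Quotient.mk Q (c + j * w * pick z)) := by
    intro Q hQ hjQ hwQ hQM z z' h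
    simp only [Ideal.Quotient.eq] at h
    have h' : j * (w * (pick z - pick z')) ∈ Q := by
      have : c + j * w * pick z - (c + j * w * pick z') = j * (w * (pick z - pick z')) := by
        ring
      rwa [this] at h
    have h'' : pick z - pick z' ∈ Q := by
      rcases hQ.mem_or_mem h' with h1 | h1
      · exact absurd h1 hjQ
      rcases hQ.mem_or_mem h1 with h2 | h2
      · exact absurd h2 hwQ
      · exact h2
    have : Ideal.Quotient.mk M (pick z) = Ideal.Quotient.mk M (pick z') :=
      Ideal.Quotient.eq.2 (hQM h'')
    rwa [hpick, hpick] at this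
  -- bad sets
  set f₁ : ↥T →+* B ⧸ Q₁ := (Ideal.Quotient.mk Q₁).comp T.subtype with hf₁
  set f₂ : ↥T →+* B ⧸ Q₂ := (Ideal.Quotient.mk Q₂).comp T.subtype with hf₂
  set Bad₁ : Set (B ⧸ Q₁) :=
    {x | ∃ p : Polynomial ↥T, p.map f₁ ≠ 0 ∧ (p.map f₁).eval x = 0} with hBad₁
  set Bad₂ : Set (B ⧸ Q₂) :=
    {x | ∃ p : Polynomial ↥T, p.map f₂ ≠ 0 ∧ (p.map f₂).eval x = 0} with hBad₂
  have hBad₁card : #↥Bad₁ ≤ #↥T := mg_bad_card f₁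
  have hBad₂card : #↥Bad₂ ≤ #↥T := mg_bad_card f₂
  -- find a good index z
  set Z : Set (B ⧸ M) := φ₁ ⁻¹' Bad₁ ∪ φ₂ ⁻¹' Bad₂ with hZ
  have hZcard : #↥Z < #(B ⧸ M) := by
    have c1 : #↥(φ₁ ⁻¹' Bad₁) ≤ #↥T :=
      le_trans (Cardinal.mk_preimage_of_injective φ₁ Bad₁
        (hinj Q₁ hp₁ hj₁ hw₁ hQ₁M)) hBad₁card
    have c2 : #↥(φ₂ ⁻¹' Bad₂) ≤ #↥T :=
      le_trans (Cardinal.mk_preimage_of_injective φ₂ Bad₂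
        (hinj Q₂ hp₂ hj₂ hw₂ hQ₂M)) hBad₂card
    calc #↥Z ≤ #↥(φ₁ ⁻¹' Bad₁) + #↥(φ₂ ⁻¹' Bad₂) := Cardinal.mk_union_le _ _
      _ ≤ #↥T + #↥T := add_le_add c1 c2
      _ = #↥T := Cardinal.add_eq_self (Cardinal.aleph0_le_mk ↥T)
      _ < #(B ⧸ M) := hTcard
  have hZne : Z ≠ Set.univ := by
    intro h
    rw [h, Cardinal.mk_univ] at hZcard
    exact lt_irrefl _ hZcard
  obtain ⟨z, hz⟩ := Set.ne_univ_iff_exists_notMem Z |>.mp hZne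
  have hz₁ : φ₁ z ∉ Bad₁ := fun h => hz (Set.mem_union_left _ h)
  have hz₂ : φ₂ z ∉ Bad₂ := fun h => hz (Set.mem_union_right _ h)
  -- define s
  refine ⟨c + j * w * pick z, (Algebra.adjoin ↥T ({c + j * w * pick z} : Set B)).toSubring,
    ?_, ?_, ?_, ?_, mg_adjoin_card T _, ?_⟩
  · intro x hx
    rw [Subalgebra.mem_toSubring]
    exact (Algebra.adjoin ↥T _).algebraMap_mem (⟨x, hx⟩ : ↥T)
  · rw [Subalgebra.mem_toSubring]
    exact Algebra.subset_adjoin rfl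
  · exact J.add_mem hcJ (J.mul_mem_right _ (J.mul_mem_right _ hjJ))
  · have : c + j * w * pick z - c = (w * pick z) * j := by ring
    rw [this]
    exact Ideal.mul_mem_mul (M.mul_mem_right _ hwM) hjJ
  · refine mg_adjoin_glue Q₁ Q₂ T hTglue _ ?_ ?_
    · intro p hp hev
      exact hz₁ ⟨p, hp, hev⟩
    · intro p hp hev
      exact hz₂ ⟨p, hp, hev⟩

end MGStep

section MGIter

variable {B : Type u} [CommRing B] [IsLocalRing B]

open IsLocalRing

lemma mg_iter (Q₁ Q₂ : Ideal B) (hp₁ : Q₁.IsPrime) (hp₂ : Q₂.IsPrime)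
    (J : Ideal B) (j w : B) (hjJ : j ∈ J) (hj₁ : j ∉ Q₁) (hj₂ : j ∉ Q₂)
    (hwM : w ∈ maximalIdeal B) (hw₁ : w ∉ Q₁) (hw₂ : w ∉ Q₂)
    (l : List B) (hl : ∀ x ∈ l, x ∈ J) :
    ∀ (T : Subring B), Infinite ↥T →
      #↥T < #(B ⧸ maximalIdeal B) →
      (∀ y ∈ T, y ∈ Q₁ ↔ y ∈ Q₂) →
      ∃ S : Subring B, T ≤ S ∧ #↥S = #↥T ∧ (∀ y ∈ S, y ∈ Q₁ ↔ y ∈ Q₂) ∧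
        ∀ x ∈ l, ∃ s ∈ S, s ∈ J ∧ s - x ∈ maximalIdeal B * J := by
  induction l with
  | nil =>
    intro T _ _ hTglue
    exact ⟨T, le_rfl, rfl, hTglue, by simp⟩
  | cons c l ih =>
    intro T hTinf hTcard hTglue
    haveI := hTinf
    obtain ⟨s, S₁, hTS₁, hsS₁, hsJ, hsc, hS₁card, hS₁glue⟩ :=
      mg_step Q₁ Q₂ hp₁ hp₂ J j w c hjJ hj₁ hj₂ hwM hw₁ hw₂ (hl c (by simp)) T hTcard hTglue
    haveI : Infinite ↥S₁ :=
      Infinite.of_injective (Set.inclusion hTS₁) (Set.inclusion_injective hTS₁)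
    obtain ⟨S, hS₁S, hScard, hSglue, hSl⟩ :=
      ih (fun x hx => hl x (by simp [hx])) S₁ this (hS₁card ▸ hTcard) hS₁glue
    refine ⟨S, le_trans hTS₁ hS₁S, by rw [hScard, hS₁card], hSglue, ?_⟩
    intro x hx
    rcases List.mem_cons.mp hx with rfl | hx
    · exact ⟨s, hS₁S hsS₁, hsJ, hsc⟩
    · exact hSl x hx

end MGIter

/-- For an MG-subring `R` and an ideal `J` of `B` not contained in `Q₁` or `Q₂`, there
is a larger MG-subring `S` of the same cardinality containing a generating set for `J`. -/
theorem stmt_13 (B : Type*) [CommRing B] [IsNoetherianRing B] [IsLocalRing B] [IsReduced B]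
    [Uncountable (B ⧸ IsLocalRing.maximalIdeal B)]
    (Q₁ Q₂ : Ideal B) (hQ₁ : Q₁ ∈ minimalPrimes B) (hQ₂ : Q₂ ∈ minimalPrimes B)
    (hne : Q₁ ≠ Q₂)
    (J : Ideal B) (hJ₁ : ¬ J ≤ Q₁) (hJ₂ : ¬ J ≤ Q₂)
    (R : Subring B) [Infinite ↥R]
    (hcard : Cardinal.mk ↥R < Cardinal.mk (B ⧸ IsLocalRing.maximalIdeal B))
    (hglue : ∀ y ∈ R, y ∈ Q₁ ↔ y ∈ Q₂) :
    ∃ S : Subring B, R ≤ S ∧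
      Cardinal.mk ↥S = Cardinal.mk ↥R ∧
      (∀ y ∈ S, y ∈ Q₁ ↔ y ∈ Q₂) ∧
      Ideal.span ((S : Set B) ∩ (J : Set B)) = J := by
  have hp₁ : Q₁.IsPrime := hQ₁.1.1
  have hp₂ : Q₂.IsPrime := hQ₂.1.1
  set M := IsLocalRing.maximalIdeal B with hMdef
  -- element of J outside both primes
  obtain ⟨j, hjJ, hj⟩ : ∃ j ∈ J, j ∉ (Q₁ : Set B) ∪ (Q₂ : Set B) := by
    by_contra h
    push_neg at h
    have : (J : Set B) ⊆ ↑Q₁ ∪ ↑Q₂ := fun x hx => h x hx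
    rcases Ideal.subset_union.mp this with h' | h'
    · exact hJ₁ h'
    · exact hJ₂ h'
  have hj₁ : j ∉ Q₁ := fun h => hj (Set.mem_union_left _ h)
  have hj₂ : j ∉ Q₂ := fun h => hj (Set.mem_union_right _ h)
  -- element of M outside both primes
  have hMQ₁ : ¬ M ≤ Q₁ := by
    intro h
    have h2 : Q₂ ≤ Q₁ := le_trans (IsLocalRing.le_maximalIdeal hp₂.ne_top) h
    exact hne (le_antisymm (hQ₁.2 ⟨hp₂, bot_le⟩ h2) h2)
  have hMQ₂ : ¬ M ≤ Q₂ := by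
    intro h
    have h2 : Q₁ ≤ Q₂ := le_trans (IsLocalRing.le_maximalIdeal hp₁.ne_top) h
    exact hne (le_antisymm h2 (hQ₂.2 ⟨hp₁, bot_le⟩ h2))
  obtain ⟨w, hwM, hw⟩ : ∃ w ∈ M, w ∉ (Q₁ : Set B) ∪ (Q₂ : Set B) := by
    by_contra h
    push_neg at h
    have : (M : Set B) ⊆ ↑Q₁ ∪ ↑Q₂ := fun x hx => h x hx
    rcases Ideal.subset_union.mp this with h' | h'
    · exact hMQ₁ h'
    · exact hMQ₂ h'
  have hw₁ : w ∉ Q₁ := fun h => hw (Set.mem_union_left _ h)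
  have hw₂ : w ∉ Q₂ := fun h => hw (Set.mem_union_right _ h)
  -- finite generating set
  obtain ⟨fs, hfs⟩ : J.FG := IsNoetherian.noetherian J
  have hl : ∀ x ∈ fs.toList, x ∈ J := by
    intro x hx
    rw [Finset.mem_toList] at hx
    rw [← hfs]
    exact Ideal.subset_span hx
  obtain ⟨S, hRS, hScard, hSglue, hSl⟩ :=
    mg_iter Q₁ Q₂ hp₁ hp₂ J j w hjJ hj₁ hj₂ hwM hw₁ hw₂ fs.toList hl R inferInstance hcard hglue
  refine ⟨S, hRS, hScard, hSglue, ?_⟩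
  set N : Ideal B := Ideal.span ((S : Set B) ∩ (J : Set B)) with hN
  apply le_antisymm
  · rw [hN, Ideal.span_le]
    intro x hx
    exact hx.2
  · -- Nakayama
    have hjac : M ≤ Ideal.jacobson ⊥ := by
      rw [IsLocalRing.jacobson_eq_maximalIdeal ⊥ bot_ne_top]
    have hNN : J ≤ N ⊔ M • J := by
      nth_rewrite 1 [← hfs]
      rw [Ideal.span_le]
      intro x hx
      obtain ⟨s, hsS, hsJ, hsx⟩ := hSl x (Finset.mem_toList.mpr hx)
      have hsN : s ∈ N := Ideal.subset_span ⟨hsS, hsJ⟩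
      have hsxMJ : s - x ∈ M • J := by rwa [Ideal.smul_eq_mul]
      have : x = s - (s - x) := by ring
      rw [SetLike.mem_coe, this]
      exact Submodule.sub_mem _ (Submodule.mem_sup_left hsN) (Submodule.mem_sup_right hsxMJ)
    exact Submodule.le_of_le_smul_of_le_jacobson_bot (IsNoetherian.noetherian J) hjac hNN
end

section
/- Let (B, M) be a reduced local ring with B/M uncountable and with distinct minimal primes Q₁, Q₂, and let b ∈ B. Let R be an infinite subring of B with |R| < |B/M| and R ∩ Q₁ = R ∩ Q₂. Then there exists a subring S of B with R ⊆ S, |S| = |R|, S ∩ Q₁ = S ∩ Q₂, and such that S contains an element of the coset b + M². -/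
/-!
Pick `a ∈ M²` outside both minimal primes (prime avoidance, since `M² ⊆ Qᵢ` would force
`M = Qᵢ`), and look for `x = b + a c` such that the image of `x` in each `B ⧸ Qᵢ` satisfies no
nonzero polynomial relation with coefficients from `R`. For a fixed polynomial only finitely many
residues of `c` modulo `Qᵢ`, hence modulo `M`, are bad, and there are only `|R|` polynomials,
so `|R| < |B ⧸ M|` leaves room for a good `c`. Then `S = R[x]` works: an element `f(x)` of `S`
lies in `Qᵢ` exactly when all coefficients of `f` do, and on `R` the two primes agree.
-/

open Polynomial Cardinal

universe u

section Evaluation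

variable {R B : Type*} [CommRing R] [CommRing B] (φ : R →+* B)

theorem Polynomial.map_mk_comp_eq_zero_iff (Q : Ideal B) (f : R[X]) :
    f.map ((Ideal.Quotient.mk Q).comp φ) = 0 ↔ ∀ n, φ (f.coeff n) ∈ Q := by
  rw [← coe_mapRingHom, ← RingHom.mem_ker, ker_mapRingHom, Ideal.mem_map_C_iff]
  simp [RingHom.mem_ker, Ideal.Quotient.eq_zero_iff_mem]

theorem Polynomial.eval₂_mem_of_map_mk_comp_eq_zero {Q : Ideal B} (x : B) {f : R[X]}
    (hf : f.map ((Ideal.Quotient.mk Q).comp φ) = 0) : f.eval₂ φ x ∈ Q := by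
  rw [← Ideal.Quotient.eq_zero_iff_mem, hom_eval₂, eval₂_eq_eval_map, hf, eval_zero]

theorem finite_image_mk_setOf_eval₂_add_mul_mem {Q : Ideal B} [Q.IsPrime] {a : B} (ha : a ∉ Q)
    (b : B) {f : R[X]} (hf : f.map ((Ideal.Quotient.mk Q).comp φ) ≠ 0) :
    (Ideal.Quotient.mk Q '' {c | f.eval₂ φ (b + a * c) ∈ Q}).Finite := by
  set π := Ideal.Quotient.mk Q
  have ha' : π a ≠ 0 := by rwa [Ne, Ideal.Quotient.eq_zero_iff_mem]
  set g := (f.map (π.comp φ)).comp (C (π b) + C (π a) * X)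
  have hg : g ≠ 0 := by
    rw [Ne, comp_eq_zero_iff, not_or]
    refine ⟨hf, fun ⟨_, h⟩ => ha' ?_⟩
    simpa using congrArg (coeff · 1) h
  refine (finite_setOfPred_isRoot hg).subset ?_
  rintro _ ⟨c, hc, rfl⟩
  have hc' : π (f.eval₂ φ (b + a * c)) = 0 := Ideal.Quotient.eq_zero_iff_mem.mpr hc
  rw [hom_eval₂, eval₂_eq_eval_map] at hc'
  simpa [g, IsRoot, eval_comp] using hc'

theorem finite_image_mk_setOf_eval₂_add_mul_mem_of_le {Q M : Ideal B} [Q.IsPrime] (hQM : Q ≤ M)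
    {a : B} (ha : a ∉ Q) (b : B) {f : R[X]} (hf : f.map ((Ideal.Quotient.mk Q).comp φ) ≠ 0) :
    (Ideal.Quotient.mk M '' {c | f.eval₂ φ (b + a * c) ∈ Q}).Finite := by
  have h := (finite_image_mk_setOf_eval₂_add_mul_mem φ ha b hf).image (Ideal.Quotient.factor hQM)
  rwa [Set.image_image, funext (Ideal.Quotient.factor_mk hQM)] at h

end Evaluation

section Cardinality

variable {R B : Type u} [CommRing R] [Infinite R] [CommRing B] (φ : R →+* B)

theorem mk_biUnion_image_mk_setOf_eval₂_add_mul_mem_le {Q M : Ideal B} [Q.IsPrime] (hQM : Q ≤ M)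
    {a : B} (ha : a ∉ Q) (b : B) :
    #(⋃ f ∈ {f : R[X] | f.map ((Ideal.Quotient.mk Q).comp φ) ≠ 0},
        Ideal.Quotient.mk M '' {c | f.eval₂ φ (b + a * c) ∈ Q}) ≤ #R := by
  have hR : ℵ₀ ≤ #R := infinite_iff.mp ‹_›
  refine (mk_biUnion_le _ _).trans ?_
  calc _ ≤ #R[X] * ℵ₀ := by
        gcongr
        · exact mk_set_le _
        · exact ciSup_le' fun f =>
            (finite_image_mk_setOf_eval₂_add_mul_mem_of_le φ hQM ha b f.2).countable.le_aleph0
    _ = #R := by rw [cardinalMk_eq_max, max_eq_left hR, mul_eq_left hR hR aleph0_ne_zero]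

theorem exists_eval₂_add_mul_mem_imp_map_eq_zero {M : Ideal B} (hcard : #R < #(B ⧸ M))
    {𝒬 : Set (Ideal B)} (h𝒬 : 𝒬.Countable) (hprime : ∀ Q ∈ 𝒬, Q.IsPrime) (hle : ∀ Q ∈ 𝒬, Q ≤ M)
    {a : B} (ha : ∀ Q ∈ 𝒬, a ∉ Q) (b : B) :
    ∃ c, ∀ Q ∈ 𝒬, ∀ f : R[X],
      f.eval₂ φ (b + a * c) ∈ Q → f.map ((Ideal.Quotient.mk Q).comp φ) = 0 := by
  set bad : Set (B ⧸ M) := ⋃ Q ∈ 𝒬,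
    ⋃ f ∈ {f : R[X] | f.map ((Ideal.Quotient.mk Q).comp φ) ≠ 0},
      Ideal.Quotient.mk M '' {c | f.eval₂ φ (b + a * c) ∈ Q}
  have hbad : #bad < #(B ⧸ M) := by
    refine lt_of_le_of_lt ?_ hcard
    refine (mk_biUnion_le _ _).trans ?_
    calc _ ≤ ℵ₀ * #R := by
          gcongr
          · exact h𝒬.le_aleph0
          · exact ciSup_le' fun Q =>
              have := hprime Q Q.2
              mk_biUnion_image_mk_setOf_eval₂_add_mul_mem_le φ (hle Q Q.2) (ha Q Q.2) b
      _ = #R := aleph0_mul_eq (infinite_iff.mp ‹_›)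
  obtain ⟨q, hq⟩ : ∃ q, q ∉ bad := by
    by_contra! h
    rw [Set.eq_univ_of_forall h, mk_univ] at hbad
    exact hbad.false
  obtain ⟨c, rfl⟩ := Ideal.Quotient.mk_surjective q
  refine ⟨c, fun Q hQ f hf => ?_⟩
  by_contra hf'
  exact hq (Set.mem_biUnion hQ (Set.mem_biUnion hf' ⟨c, hf, rfl⟩))

end Cardinality

section Adjoin

variable {B : Type*} [CommRing B] (R : Subring B) (x : B)

theorem Subring.le_range_eval₂RingHom : R ≤ (eval₂RingHom R.subtype x).range :=
  fun r hr => ⟨C ⟨r, hr⟩, by simp⟩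

theorem Subring.mk_range_eval₂RingHom [Infinite R] : #(eval₂RingHom R.subtype x).range = #R := by
  refine le_antisymm ?_ (mk_le_mk_of_subset (R.le_range_eval₂RingHom x))
  calc #(eval₂RingHom R.subtype x).range ≤ #R[X] := mk_range_le
    _ = #R := by rw [cardinalMk_eq_max, max_eq_left (infinite_iff.mp ‹_›)]

end Adjoin

theorem IsLocalRing.maximalIdeal_not_le_of_mem_minimalPrimes {B : Type*} [CommRing B]
    [IsLocalRing B] {Q Q' : Ideal B} (hQ : Q ∈ minimalPrimes B) (hQ' : Q' ∈ minimalPrimes B)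
    (hne : Q ≠ Q') : ¬ maximalIdeal B ≤ Q := fun h =>
  have hQ'Q : Q' ≤ Q := (le_maximalIdeal hQ'.1.1.ne_top).trans h
  hne (le_antisymm (hQ.2 ⟨hQ'.1.1, bot_le⟩ hQ'Q) hQ'Q)

theorem IsLocalRing.exists_mem_maximalIdeal_pow_notMem_minimalPrimes {B : Type*} [CommRing B]
    [IsLocalRing B] {Q₁ Q₂ : Ideal B} (hQ₁ : Q₁ ∈ minimalPrimes B) (hQ₂ : Q₂ ∈ minimalPrimes B)
    (hne : Q₁ ≠ Q₂) (n : ℕ) : ∃ a ∈ maximalIdeal B ^ n, a ∉ Q₁ ∧ a ∉ Q₂ := by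
  have h : ¬ ((maximalIdeal B ^ n : Ideal B) : Set B) ⊆ Q₁ ∪ Q₂ := by
    rw [Ideal.subset_union]
    rintro (h | h)
    · exact maximalIdeal_not_le_of_mem_minimalPrimes hQ₁ hQ₂ hne
        (Ideal.IsPrime.le_of_pow_le (hP := hQ₁.1.1) h)
    · exact maximalIdeal_not_le_of_mem_minimalPrimes hQ₂ hQ₁ hne.symm
        (Ideal.IsPrime.le_of_pow_le (hP := hQ₂.1.1) h)
  obtain ⟨a, haM, ha⟩ := Set.not_subset.mp h
  exact ⟨a, haM, by simpa [not_or] using ha⟩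

theorem stmt_14_general (B : Type*) [CommRing B] [IsLocalRing B]
    (Q₁ Q₂ : Ideal B) (hQ₁ : Q₁ ∈ minimalPrimes B) (hQ₂ : Q₂ ∈ minimalPrimes B)
    (hne : Q₁ ≠ Q₂)
    (b : B)
    (R : Subring B) [Infinite ↥R]
    (hcard : Cardinal.mk ↥R < Cardinal.mk (B ⧸ IsLocalRing.maximalIdeal B))
    (hglue : ∀ y ∈ R, y ∈ Q₁ ↔ y ∈ Q₂) :
    ∃ S : Subring B, R ≤ S ∧
      Cardinal.mk ↥S = Cardinal.mk ↥R ∧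
      (∀ y ∈ S, y ∈ Q₁ ↔ y ∈ Q₂) ∧
      (∃ s ∈ S, s - b ∈ (IsLocalRing.maximalIdeal B) ^ 2) := by
  obtain ⟨a, haM, ha₁, ha₂⟩ :=
    IsLocalRing.exists_mem_maximalIdeal_pow_notMem_minimalPrimes hQ₁ hQ₂ hne 2
  have hprime : ∀ Q ∈ ({Q₁, Q₂} : Set (Ideal B)), Q.IsPrime := by
    rintro Q (rfl | rfl)
    exacts [hQ₁.1.1, hQ₂.1.1]
  obtain ⟨c, hc⟩ := exists_eval₂_add_mul_mem_imp_map_eq_zero R.subtype hcard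
    (Set.toFinite _).countable hprime
    (fun Q hQ => IsLocalRing.le_maximalIdeal (hprime Q hQ).ne_top)
    (by rintro Q (rfl | rfl) <;> assumption) b
  set x := b + a * c
  have hQ_iff (Q) (hQ : Q ∈ ({Q₁, Q₂} : Set (Ideal B))) (f : R[X]) :
      f.eval₂ R.subtype x ∈ Q ↔ ∀ n, (f.coeff n : B) ∈ Q := by
    calc _ ↔ f.map ((Ideal.Quotient.mk Q).comp R.subtype) = 0 :=
          ⟨hc Q hQ f, eval₂_mem_of_map_mk_comp_eq_zero _ x⟩
      _ ↔ _ := map_mk_comp_eq_zero_iff _ Q f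
  refine ⟨(eval₂RingHom R.subtype x).range, R.le_range_eval₂RingHom x,
    R.mk_range_eval₂RingHom x, ?_, x, ⟨X, by simp⟩, by simpa [x] using Ideal.mul_mem_right c _ haM⟩
  rintro _ ⟨f, rfl⟩
  rw [coe_eval₂RingHom, hQ_iff Q₁ (by simp), hQ_iff Q₂ (by simp)]
  exact forall_congr' fun n => hglue _ (f.coeff n).2

/-- For an MG-subring `R` and `b ∈ B`, there is a larger MG-subring `S` of the same
cardinality containing an element of the coset `b + M²`. -/
theorem stmt_14 (B : Type*) [CommRing B] [IsNoetherianRing B] [IsLocalRing B] [IsReduced B]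
    [Uncountable (B ⧸ IsLocalRing.maximalIdeal B)]
    (Q₁ Q₂ : Ideal B) (hQ₁ : Q₁ ∈ minimalPrimes B) (hQ₂ : Q₂ ∈ minimalPrimes B)
    (hne : Q₁ ≠ Q₂)
    (b : B)
    (R : Subring B) [Infinite ↥R]
    (hcard : Cardinal.mk ↥R < Cardinal.mk (B ⧸ IsLocalRing.maximalIdeal B))
    (hglue : ∀ y ∈ R, y ∈ Q₁ ↔ y ∈ Q₂) :
    ∃ S : Subring B, R ≤ S ∧
      Cardinal.mk ↥S = Cardinal.mk ↥R ∧
      (∀ y ∈ S, y ∈ Q₁ ↔ y ∈ Q₂) ∧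
      (∃ s ∈ S, s - b ∈ (IsLocalRing.maximalIdeal B) ^ 2) :=
  stmt_14_general B Q₁ Q₂ hQ₁ hQ₂ hne b R hcard hglue
end
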